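/- arXiv:0905.1942 — 4 statements merged into one kernel-verified Lean document; each statement's English description precedes it below -/
import Mathlib

section
/- For each α > 0 and r, t ∈ ℕ, there exist c = c₂(α,r,t) ∈ ℕ and δ = δ₂(c,α,r,t) > 0 such that the following holds. Let G be a graph on n vertices, let (S_1,…,S_r) be a partition of V(G), and let B ⊆ V(G) satisfy |B| ≥ c and |(Γ(b) ∩ S_j) △ (Γ(b') ∩ S_j)| ≥ αn for every j ∈ [r] and all distinct b, b' ∈ B. Then there exist a subset B' ⊆ B with |B'| = t, and sets T^{(i)}_1, …, T^{(i)}_{2^t} ⊆ S_i for each i ∈ [r] with |T^{(i)}_j| ≥ δn, such that: (a) if u, v ∈ T^{(i)}_j then Γ(u) ∩ B' = Γ(v) ∩ B'; and (b) if W = {w_1,…,w_{2^t}} with w_j ∈ T^{(1)}_j ∪ … ∪ T^{(r)}_j for each j ∈ [2^t], then W → B'. -/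
open scoped symmDiff

namespace ABBM

variable {V : Type*}

/-- `A` shatters `B` in `G`: every subset of `B` is the neighbourhood (within `B`)
of some vertex of `A`.  This is the paper's relation `A → B`. -/
def Shatters (G : SimpleGraph V) (A B : Finset V) : Prop :=
  ∀ S ⊆ B, ∃ a ∈ A, ∀ b ∈ B, G.Adj a b ↔ b ∈ S

/-- `G` is `U(k)`-free: there are no disjoint vertex sets `X`, `Y` such that the
bipartite graph induced by `G` between `X` and `Y` is (a copy of) `U(k)`;
equivalently, no disjoint `X`, `Y` with `|Y| = k` and `X` shattering `Y`. -/
def UFree (G : SimpleGraph V) (k : ℕ) : Prop :=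
  ¬ ∃ X Y : Finset V, Disjoint X Y ∧ Y.card = k ∧ Shatters G X Y

/-- The induced subgraph of `G` on `S` is `U(k)`-free. -/
def UFreeOn (G : SimpleGraph V) (S : Finset V) (k : ℕ) : Prop :=
  ¬ ∃ X Y : Finset V, X ⊆ S ∧ Y ⊆ S ∧ Disjoint X Y ∧ Y.card = k ∧ Shatters G X Y

open scoped Classical in
/-- The (full) neighbourhood `Γ(u)` of a vertex, as a `Finset`. -/
noncomputable def nbr [Fintype V] (G : SimpleGraph V) (u : V) : Finset V :=
  Finset.univ.filter fun v => G.Adj u v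

/-! ### Auxiliary development -/

set_option maxHeartbeats 1600000

open Finset

lemma mem_nbr {n : ℕ} {G : SimpleGraph (Fin n)} {u v : Fin n} :
    v ∈ nbr G u ↔ G.Adj u v := by
  classical
  simp [nbr]

/-- Parameterized statement: from any `c` vertices of `B` which pairwise have
symmetric difference at least `d` inside every part `X i`, one can select `t`
vertices all of whose `2^t` "atoms" inside each part have at least `δ·d` elements.  -/
def QS (r t : ℕ) (L : ℝ) (c : ℕ) (δ : ℝ) : Prop :=
  ∀ (n : ℕ) (G : SimpleGraph (Fin n)) (X : Fin r → Finset (Fin n))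
    (B : Finset (Fin n)) (d : ℝ),
    0 < d →
    (∀ i, ((X i).card : ℝ) ≤ L * d) →
    (∀ i : Fin r, ∀ b ∈ B, ∀ b' ∈ B, b ≠ b' →
      d ≤ (((nbr G b ∩ X i) ∆ (nbr G b' ∩ X i)).card : ℝ)) →
    c ≤ B.card →
    ∃ B' ⊆ B, B'.card = t ∧
      ∀ i : Fin r, ∀ P ∈ B'.powerset,
        δ * d ≤ (((X i).filter (fun x => nbr G x ∩ B' = P)).card : ℝ)

lemma symmDiff_inter_subset {n : ℕ} (a b x : Finset (Fin n)) :
    (a ∩ x) ∆ (b ∩ x) ⊆ x := by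
  intro y hy
  rw [Finset.mem_symmDiff] at hy
  rcases hy with ⟨hy, -⟩ | ⟨hy, -⟩ <;> exact (Finset.mem_inter.mp hy).2

lemma QS_zero (r : ℕ) (L : ℝ) : QS r 0 L 2 1 := by
  intro n G X B d hd hX hsep hB
  refine ⟨∅, empty_subset _, card_empty, ?_⟩
  intro i P hP
  rw [mem_powerset, subset_empty] at hP
  subst hP
  obtain ⟨b, hb, b', hb', hne⟩ := Finset.one_lt_card.mp (show 1 < B.card by omega)
  have h1 := hsep i b hb b' hb' hne
  have h3 : (((nbr G b ∩ X i) ∆ (nbr G b' ∩ X i)).card : ℝ) ≤ ((X i).card : ℝ) :=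
    Nat.cast_le.mpr (card_le_card (symmDiff_inter_subset _ _ _))
  have h4 : (X i).filter (fun x => nbr G x ∩ (∅ : Finset (Fin n)) = ∅) = X i := by
    apply filter_true_of_mem; intro x _; simp
  rw [h4, one_mul]
  linarith

/-- Removing a region `A` from the ground set reduces the symmetric
difference by at most what `F1 ∪ F2` covers of it. -/
lemma symmDiff_drop {n : ℕ} (N N' Xi A F1 F2 : Finset (Fin n))
    (hcover : ((N ∩ Xi) ∆ (N' ∩ Xi)) ∩ A ⊆ F1 ∪ F2) :
    ((N ∩ Xi) ∆ (N' ∩ Xi)).card ≤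
      ((N ∩ (Xi \ A)) ∆ (N' ∩ (Xi \ A))).card + (F1.card + F2.card) := by
  classical
  have hsub : (N ∩ Xi) ∆ (N' ∩ Xi) ⊆
      ((N ∩ (Xi \ A)) ∆ (N' ∩ (Xi \ A))) ∪ (F1 ∪ F2) := by
    intro x hx
    by_cases hxA : x ∈ A
    · exact mem_union_right _ (hcover (mem_inter.mpr ⟨hx, hxA⟩))
    · rw [Finset.mem_symmDiff] at hx
      refine mem_union_left _ ?_
      rw [Finset.mem_symmDiff]
      rcases hx with ⟨hx1, hx2⟩ | ⟨hx1, hx2⟩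
      · rw [mem_inter] at hx1
        exact Or.inl ⟨mem_inter.mpr ⟨hx1.1, mem_sdiff.mpr ⟨hx1.2, hxA⟩⟩,
          fun hc => hx2 (mem_inter.mpr ⟨(mem_inter.mp hc).1,
            (mem_sdiff.mp (mem_inter.mp hc).2).1⟩)⟩
      · rw [mem_inter] at hx1
        exact Or.inr ⟨mem_inter.mpr ⟨hx1.1, mem_sdiff.mpr ⟨hx1.2, hxA⟩⟩,
          fun hc => hx2 (mem_inter.mpr ⟨(mem_inter.mp hc).1,
            (mem_sdiff.mp (mem_inter.mp hc).2).1⟩)⟩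
  calc ((N ∩ Xi) ∆ (N' ∩ Xi)).card
      ≤ (((N ∩ (Xi \ A)) ∆ (N' ∩ (Xi \ A))) ∪ (F1 ∪ F2)).card := card_le_card hsub
    _ ≤ ((N ∩ (Xi \ A)) ∆ (N' ∩ (Xi \ A))).card + (F1 ∪ F2).card := card_union_le _ _
    _ ≤ _ := by have := card_union_le F1 F2; omega

open scoped Classical in
/-- `b` fails to split the atom described by `p` (a part index, a pattern, and a side). -/
def BadAt {n r : ℕ} (G : SimpleGraph (Fin n)) (X : Fin r → Finset (Fin n))
    (B'' : Finset (Fin n)) (ε : ℝ) (b : Fin n)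
    (p : Fin r × Finset (Fin n) × Bool) : Prop :=
  p.2.1 ∈ B''.powerset ∧
  (p.2.2 = true →
    ((((X p.1).filter (fun x => nbr G x ∩ B'' = p.2.1)).filter
      (fun x => G.Adj x b)).card : ℝ) < ε) ∧
  (p.2.2 = false →
    ((((X p.1).filter (fun x => nbr G x ∩ B'' = p.2.1)).filter
      (fun x => ¬ G.Adj x b)).card : ℝ) < ε)

lemma fuel (r t : ℕ) (L : ℝ) (hL : 0 < L) (c0 : ℕ) (δ0 : ℝ) (hδ0 : 0 < δ0)
    (hQ : QS r t (2 * L) c0 δ0) :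
    ∀ s : ℕ, ∀ (n : ℕ) (G : SimpleGraph (Fin n)) (X : Fin r → Finset (Fin n))
      (B : Finset (Fin n)) (d : ℝ),
      0 < d →
      (∀ i, ((X i).card : ℝ) ≤ L * d) →
      ((∑ i, ((X i).card : ℝ)) ≤ (s : ℝ) * (δ0 * d / 2)) →
      (∀ i : Fin r, ∀ b ∈ B, ∀ b' ∈ B, b ≠ b' →
        d / 2 + (∑ i, ((X i).card : ℝ)) / (2 * ((r : ℝ) + 1) * L)
          ≤ (((nbr G b ∩ X i) ∆ (nbr G b' ∩ X i)).card : ℝ)) →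
      (c0 + t + 2 + t * s) * ((r + 1) * 2 ^ (t + 1)) ^ s ≤ B.card →
      ∃ B' ⊆ B, B'.card = t + 1 ∧
        ∀ i : Fin r, ∀ P ∈ B'.powerset,
          δ0 / (16 * ((r : ℝ) + 1) * L) * d
            ≤ (((X i).filter (fun x => nbr G x ∩ B' = P)).card : ℝ) := by
  have hden : (0:ℝ) < 2 * ((r : ℝ) + 1) * L := by positivity
  have hδ'' : (0:ℝ) < δ0 / (16 * ((r : ℝ) + 1) * L) := by positivity
  have hLne : L ≠ 0 := ne_of_gt hL
  have hrne : ((r : ℝ) + 1) ≠ 0 := by positivity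
  intro s
  induction s with
  | zero =>
    intro n G X B d hd hX hSig hsep hB
    rcases Nat.eq_zero_or_pos r with hr | hr
    · subst hr
      obtain ⟨B', hB'sub, hB'card⟩ :=
        Finset.exists_subset_card_eq (s := B) (n := t + 1) (by simp at hB; omega)
      exact ⟨B', hB'sub, hB'card, fun i => i.elim0⟩
    · exfalso
      have hBge : 2 ≤ B.card := by simp at hB; omega
      obtain ⟨b, hb, b', hb', hne⟩ := Finset.one_lt_card.mp hBge
      set i0 : Fin r := ⟨0, hr⟩
      have hSig0 : (0:ℝ) ≤ ∑ i, ((X i).card : ℝ) :=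
        Finset.sum_nonneg fun i _ => Nat.cast_nonneg _
      have hXe : X i0 = ∅ := by
        have h1 : ((X i0).card : ℝ) ≤ ∑ i, ((X i).card : ℝ) :=
          Finset.single_le_sum (f := fun i => ((X i).card : ℝ))
            (fun i _ => Nat.cast_nonneg _) (mem_univ i0)
        have h2 : ((X i0).card : ℝ) ≤ 0 := by
          push_cast at hSig
          linarith
        have h2' : (0:ℝ) ≤ ((X i0).card : ℝ) := Nat.cast_nonneg _
        have h3 : (X i0).card = 0 := by exact_mod_cast le_antisymm h2 h2'
        exact card_eq_zero.mp h3
      have h3 := hsep i0 b hb b' hb' hne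
      rw [hXe] at h3
      simp only [inter_empty, symmDiff_self, bot_eq_empty, card_empty, Nat.cast_zero] at h3
      have h4 : (0:ℝ) ≤ (∑ i, ((X i).card : ℝ)) / (2 * ((r : ℝ) + 1) * L) :=
        div_nonneg hSig0 (le_of_lt hden)
      linarith
  | succ s ih =>
    intro n G X B d hd hX hSig hsep hB
    classical
    have hKpos : 0 < (r + 1) * 2 ^ (t + 1) := by positivity
    have hsep2 : ∀ i : Fin r, ∀ b ∈ B, ∀ b' ∈ B, b ≠ b' →
        d / 2 ≤ (((nbr G b ∩ X i) ∆ (nbr G b' ∩ X i)).card : ℝ) := by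
      intro i b hb b' hb' hne
      have h1 := hsep i b hb b' hb' hne
      have h0 : (0:ℝ) ≤ (∑ i, ((X i).card : ℝ)) / (2 * ((r : ℝ) + 1) * L) :=
        div_nonneg (Finset.sum_nonneg fun i _ => Nat.cast_nonneg _) (le_of_lt hden)
      linarith
    have hc0B : c0 ≤ B.card := by
      refine le_trans ?_ hB
      calc c0 ≤ c0 + t + 2 + t * (s + 1) := by omega
        _ ≤ (c0 + t + 2 + t * (s + 1)) * ((r + 1) * 2 ^ (t + 1)) ^ (s + 1) :=
          Nat.le_mul_of_pos_right _ (by positivity)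
    obtain ⟨B'', hB''sub, hB''card, hAtoms⟩ :=
      hQ n G X B (d / 2) (by linarith)
        (fun i => by
          calc ((X i).card : ℝ) ≤ L * d := hX i
            _ = 2 * L * (d / 2) := by ring)
        hsep2 hc0B
    set C := B \ B'' with hC
    have hCB : C ⊆ B := sdiff_subset
    have hCcard : C.card = B.card - t := by rw [hC, card_sdiff_of_subset hB''sub, hB''card]
    by_cases hdone : ∃ b ∈ C, ∀ i : Fin r, ∀ P ∈ B''.powerset,
        δ0 / (16 * ((r : ℝ) + 1) * L) * d ≤
          ((((X i).filter (fun x => nbr G x ∩ B'' = P)).filter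
            (fun x => G.Adj x b)).card : ℝ) ∧
        δ0 / (16 * ((r : ℝ) + 1) * L) * d ≤
          ((((X i).filter (fun x => nbr G x ∩ B'' = P)).filter
            (fun x => ¬ G.Adj x b)).card : ℝ)
    · -- a vertex splitting all atoms: extend B''
      obtain ⟨b, hbC, hsplit⟩ := hdone
      have hbB : b ∈ B := hCB hbC
      have hbnB'' : b ∉ B'' := (mem_sdiff.mp hbC).2
      refine ⟨insert b B'', insert_subset hbB hB''sub,
        by rw [card_insert_of_notMem hbnB'', hB''card], ?_⟩
      intro i Q hQm
      rw [mem_powerset] at hQm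
      have hPm : Q.erase b ∈ B''.powerset := by
        rw [mem_powerset]
        intro y hy
        have hy' := hQm (mem_of_mem_erase hy)
        rcases mem_insert.mp hy' with h | h
        · exact absurd h (ne_of_mem_erase hy)
        · exact h
      by_cases hbQ : b ∈ Q
      · have hsub : ((X i).filter (fun x => nbr G x ∩ B'' = Q.erase b)).filter
            (fun x => G.Adj x b) ⊆
            (X i).filter (fun x => nbr G x ∩ (insert b B'') = Q) := by
          intro x hx
          rw [mem_filter] at hx ⊢
          obtain ⟨hx1, hx2⟩ := hx
          rw [mem_filter] at hx1
          refine ⟨hx1.1, ?_⟩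
          have hbn : b ∈ nbr G x := mem_nbr.mpr hx2
          rw [inter_insert_of_mem hbn, hx1.2, insert_erase hbQ]
        exact le_trans (hsplit i (Q.erase b) hPm).1 (Nat.cast_le.mpr (card_le_card hsub))
      · have hsub : ((X i).filter (fun x => nbr G x ∩ B'' = Q.erase b)).filter
            (fun x => ¬ G.Adj x b) ⊆
            (X i).filter (fun x => nbr G x ∩ (insert b B'') = Q) := by
          intro x hx
          rw [mem_filter] at hx ⊢
          obtain ⟨hx1, hx2⟩ := hx
          rw [mem_filter] at hx1
          refine ⟨hx1.1, ?_⟩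
          have hbn : b ∉ nbr G x := fun hc => hx2 (mem_nbr.mp hc)
          rw [inter_insert_of_notMem hbn, hx1.2, erase_eq_of_notMem hbQ]
        exact le_trans (hsplit i (Q.erase b) hPm).2 (Nat.cast_le.mpr (card_le_card hsub))
    · -- stuck: every candidate fails at some atom; pigeonhole and recurse
      push_neg at hdone
      have hfail : ∀ b ∈ C, ∃ p,
          BadAt G X B'' (δ0 / (16 * ((r : ℝ) + 1) * L) * d) b p := by
        intro b hb
        obtain ⟨i, P, hP, himp⟩ := hdone b hb
        rcases le_or_gt (δ0 / (16 * ((r : ℝ) + 1) * L) * d)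
            ((((X i).filter (fun x => nbr G x ∩ B'' = P)).filter
              (fun x => G.Adj x b)).card : ℝ) with h1 | h1
        · exact ⟨(i, P, false), hP, by simp, fun _ => himp h1⟩
        · exact ⟨(i, P, true), hP, fun _ => h1, by simp⟩
      have hCne : C.Nonempty := by
        rw [← card_pos, hCcard]
        have h1 : c0 + t + 2 + t * (s + 1) ≤
            (c0 + t + 2 + t * (s + 1)) * ((r + 1) * 2 ^ (t + 1)) ^ (s + 1) :=
          Nat.le_mul_of_pos_right _ (by positivity)
        omega
      obtain ⟨b0, hb0⟩ := hCne
      obtain ⟨p0, hp0⟩ := hfail b0 hb0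
      haveI : Inhabited (Fin r) := ⟨p0.1⟩
      set f : Fin n → Fin r × Finset (Fin n) × Bool := fun b =>
        if h : ∃ p, BadAt G X B'' (δ0 / (16 * ((r : ℝ) + 1) * L) * d) b p
        then h.choose else default with hf
      have hfspec : ∀ b ∈ C, BadAt G X B'' (δ0 / (16 * ((r : ℝ) + 1) * L) * d) b (f b) := by
        intro b hb
        have h := hfail b hb
        rw [hf]
        simp only [dif_pos h]
        exact h.choose_spec
      have hmaps : ∀ b ∈ C, f b ∈
          (univ : Finset (Fin r)) ×ˢ (B''.powerset ×ˢ (univ : Finset Bool)) := by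
        intro b hb
        have h := hfspec b hb
        unfold BadAt at h
        exact mem_product.mpr ⟨mem_univ _, mem_product.mpr ⟨h.1, mem_univ _⟩⟩
      have htgtcard : ((univ : Finset (Fin r)) ×ˢ
          (B''.powerset ×ˢ (univ : Finset Bool))).card ≤ (r + 1) * 2 ^ (t + 1) := by
        rw [card_product, card_product, card_univ, card_univ, card_powerset,
          hB''card, Fintype.card_fin, Fintype.card_bool]
        calc r * (2 ^ t * 2) ≤ (r + 1) * (2 ^ t * 2) :=
              Nat.mul_le_mul_right _ (by omega)
          _ = (r + 1) * 2 ^ (t + 1) := by ring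
      have hn : ((univ : Finset (Fin r)) ×ˢ (B''.powerset ×ˢ (univ : Finset Bool))).card *
          ((c0 + t + 2 + t * s) * ((r + 1) * 2 ^ (t + 1)) ^ s) ≤ C.card := by
        have key : (c0 + t + 2 + t * s) * ((r + 1) * 2 ^ (t + 1)) ^ (s + 1) + t
            ≤ B.card := by
          have h1 : (c0 + t + 2 + t * (s + 1)) * ((r + 1) * 2 ^ (t + 1)) ^ (s + 1) =
              (c0 + t + 2 + t * s) * ((r + 1) * 2 ^ (t + 1)) ^ (s + 1) +
              t * ((r + 1) * 2 ^ (t + 1)) ^ (s + 1) := by ring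
          have h2 : t ≤ t * ((r + 1) * 2 ^ (t + 1)) ^ (s + 1) :=
            Nat.le_mul_of_pos_right _ (by positivity)
          omega
        have h3 := Nat.mul_le_mul_right
          ((c0 + t + 2 + t * s) * ((r + 1) * 2 ^ (t + 1)) ^ s) htgtcard
        have h4 : ((r + 1) * 2 ^ (t + 1)) * ((c0 + t + 2 + t * s) *
            ((r + 1) * 2 ^ (t + 1)) ^ s)
            = (c0 + t + 2 + t * s) * ((r + 1) * 2 ^ (t + 1)) ^ (s + 1) := by ring
        rw [hCcard]
        omega
      obtain ⟨y, hytgt, hycard⟩ :=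
        Finset.exists_le_card_fiber_of_mul_le_card_of_maps_to hmaps
          ⟨f b0, hmaps b0 hb0⟩ hn
      set Gs := C.filter (fun b => f b = y) with hGsdef
      have hGsC : Gs ⊆ C := filter_subset _ _
      have hGsB : Gs ⊆ B := hGsC.trans hCB
      have hGscard : (c0 + t + 2 + t * s) * ((r + 1) * 2 ^ (t + 1)) ^ s ≤ Gs.card := hycard
      have hGsPred : ∀ b ∈ Gs,
          BadAt G X B'' (δ0 / (16 * ((r : ℝ) + 1) * L) * d) b y := by
        intro b hb
        obtain ⟨hbC, hfb⟩ := mem_filter.mp hb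
        have := hfspec b hbC
        rwa [hfb] at this
      have hP0 : y.2.1 ∈ B''.powerset := by
        have h1 := mem_product.mp hytgt
        exact (mem_product.mp h1.2).1
      set A := (X y.1).filter (fun x => nbr G x ∩ B'' = y.2.1) with hAdef
      have hAcard : δ0 * (d / 2) ≤ (A.card : ℝ) := hAtoms y.1 y.2.1 hP0
      have hAsub : A ⊆ X y.1 := filter_subset _ _
      set X' := Function.update X y.1 (X y.1 \ A) with hX'def
      have hX'sub : ∀ i, X' i ⊆ X i := by
        intro i
        by_cases h : i = y.1
        · subst h; rw [hX'def, Function.update_self]; exact sdiff_subset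
        · rw [hX'def, Function.update_of_ne h]
      have hAnonneg : (0:ℝ) ≤ (A.card : ℝ) := Nat.cast_nonneg _
      have hSig'eq : (∑ i, ((X' i).card : ℝ)) = (∑ i, ((X i).card : ℝ)) - A.card := by
        have hL1 : (∑ i, ((X' i).card : ℝ)) =
            ((X' y.1).card : ℝ) + ∑ i ∈ univ.erase y.1, ((X' i).card : ℝ) :=
          (Finset.add_sum_erase _ _ (mem_univ y.1)).symm
        have hR1 : (∑ i, ((X i).card : ℝ)) =
            ((X y.1).card : ℝ) + ∑ i ∈ univ.erase y.1, ((X i).card : ℝ) :=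
          (Finset.add_sum_erase _ _ (mem_univ y.1)).symm
        have hEq : ∑ i ∈ univ.erase y.1, ((X' i).card : ℝ) =
            ∑ i ∈ univ.erase y.1, ((X i).card : ℝ) := by
          refine Finset.sum_congr rfl fun i hi => ?_
          rw [hX'def, Function.update_of_ne (Finset.ne_of_mem_erase hi)]
        have hXi0 : ((X' y.1).card : ℝ) = ((X y.1).card : ℝ) - A.card := by
          rw [hX'def, Function.update_self, card_sdiff_of_subset hAsub,
            Nat.cast_sub (card_le_card hAsub)]
        rw [hL1, hR1, hEq, hXi0]
        ring
      have hSig' : (∑ i, ((X' i).card : ℝ)) ≤ (s : ℝ) * (δ0 * d / 2) := by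
        rw [hSig'eq]
        push_cast at hSig
        linarith
      have hX'card : ∀ i, ((X' i).card : ℝ) ≤ L * d := fun i =>
        le_trans (Nat.cast_le.mpr (card_le_card (hX'sub i))) (hX i)
      have hsep' : ∀ i : Fin r, ∀ b ∈ Gs, ∀ b' ∈ Gs, b ≠ b' →
          d / 2 + (∑ i, ((X' i).card : ℝ)) / (2 * ((r : ℝ) + 1) * L)
            ≤ (((nbr G b ∩ X' i) ∆ (nbr G b' ∩ X' i)).card : ℝ) := by
        intro i b hb b' hb' hne
        have hbB : b ∈ B := hGsB hb
        have hb'B : b' ∈ B := hGsB hb'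
        have horig := hsep i b hbB b' hb'B hne
        by_cases hi : i = y.1
        · subst hi
          rw [hX'def, Function.update_self]
          -- covering sets depending on the side
          have hFs : ∃ F1 F2 : Finset (Fin n),
              (((nbr G b ∩ X y.1) ∆ (nbr G b' ∩ X y.1)) ∩ A ⊆ F1 ∪ F2) ∧
              (F1.card : ℝ) < δ0 / (16 * ((r : ℝ) + 1) * L) * d ∧
              (F2.card : ℝ) < δ0 / (16 * ((r : ℝ) + 1) * L) * d := by
            have hpb := hGsPred b hb
            have hpb' := hGsPred b' hb'
            unfold BadAt at hpb hpb'
            cases hsd : y.2.2 with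
            | true =>
              refine ⟨A.filter (fun x => G.Adj x b), A.filter (fun x => G.Adj x b'),
                ?_, hpb.2.1 hsd, hpb'.2.1 hsd⟩
              intro x hx
              rw [mem_inter] at hx
              obtain ⟨hxs, hxA⟩ := hx
              rw [Finset.mem_symmDiff] at hxs
              rcases hxs with ⟨hx1, -⟩ | ⟨hx1, -⟩
              · exact mem_union_left _ (mem_filter.mpr
                  ⟨hxA, (mem_nbr.mp (mem_inter.mp hx1).1).symm⟩)
              · exact mem_union_right _ (mem_filter.mpr
                  ⟨hxA, (mem_nbr.mp (mem_inter.mp hx1).1).symm⟩)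
            | false =>
              refine ⟨A.filter (fun x => ¬ G.Adj x b), A.filter (fun x => ¬ G.Adj x b'),
                ?_, hpb.2.2 hsd, hpb'.2.2 hsd⟩
              intro x hx
              rw [mem_inter] at hx
              obtain ⟨hxs, hxA⟩ := hx
              rw [Finset.mem_symmDiff] at hxs
              rcases hxs with ⟨-, hx2⟩ | ⟨-, hx2⟩
              · refine mem_union_right _ (mem_filter.mpr ⟨hxA, fun hc => ?_⟩)
                exact hx2 (mem_inter.mpr ⟨mem_nbr.mpr hc.symm, hAsub hxA⟩)
              · refine mem_union_left _ (mem_filter.mpr ⟨hxA, fun hc => ?_⟩)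
                exact hx2 (mem_inter.mpr ⟨mem_nbr.mpr hc.symm, hAsub hxA⟩)
          obtain ⟨F1, F2, hcover, hF1card, hF2card⟩ := hFs
          have hdrop := symmDiff_drop (nbr G b) (nbr G b') (X y.1) A F1 F2 hcover
          have hdropR : (((nbr G b ∩ X y.1) ∆ (nbr G b' ∩ X y.1)).card : ℝ) ≤
              (((nbr G b ∩ (X y.1 \ A)) ∆ (nbr G b' ∩ (X y.1 \ A))).card : ℝ) +
              ((F1.card : ℝ) + (F2.card : ℝ)) := by exact_mod_cast hdrop
          have hβ : (δ0 * (d / 2)) / (2 * ((r : ℝ) + 1) * L) ≤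
              (A.card : ℝ) / (2 * ((r : ℝ) + 1) * L) := by gcongr
          have hβeq : (δ0 * (d / 2)) / (2 * ((r : ℝ) + 1) * L) =
              4 * (δ0 / (16 * ((r : ℝ) + 1) * L) * d) := by
            field_simp
            ring
          rw [hSig'eq, sub_div]
          have hδd : (0:ℝ) < δ0 / (16 * ((r : ℝ) + 1) * L) * d := by positivity
          linarith
        · rw [hX'def, Function.update_of_ne hi]
          have hle : (∑ j, ((X' j).card : ℝ)) / (2 * ((r : ℝ) + 1) * L) ≤
              (∑ j, ((X j).card : ℝ)) / (2 * ((r : ℝ) + 1) * L) := by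
            rw [hSig'eq]
            gcongr
            linarith
          linarith
      obtain ⟨B', hB'Gs, hB'card, hatoms'⟩ :=
        ih n G X' Gs d hd hX'card hSig' hsep' hGscard
      refine ⟨B', hB'Gs.trans hGsB, hB'card, ?_⟩
      intro i P hP
      refine le_trans (hatoms' i P hP) (Nat.cast_le.mpr (card_le_card ?_))
      exact filter_subset_filter _ (hX'sub i)

lemma Qmain (r : ℕ) : ∀ t : ℕ, ∀ L : ℝ, 0 < L →
    ∃ c : ℕ, ∃ δ : ℝ, 0 < δ ∧ QS r t L c δ := by
  intro t
  induction t with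
  | zero => exact fun L hL => ⟨2, 1, one_pos, QS_zero r L⟩
  | succ t ih =>
    intro L hL
    obtain ⟨c0, δ0, hδ0, hQ⟩ := ih (2 * L) (by positivity)
    set s0 := ⌈(2 * ((r : ℝ) + 1) * L) / (δ0 / 2)⌉₊ with hs0
    refine ⟨(c0 + t + 2 + t * s0) * ((r + 1) * 2 ^ (t + 1)) ^ s0,
      δ0 / (16 * ((r : ℝ) + 1) * L), by positivity, ?_⟩
    intro n G X B d hd hX hsep hB
    have hSigle : (∑ i, ((X i).card : ℝ)) ≤ (r : ℝ) * (L * d) := by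
      calc (∑ i, ((X i).card : ℝ)) ≤ ∑ _i : Fin r, L * d :=
            Finset.sum_le_sum (fun i _ => hX i)
        _ = (r : ℝ) * (L * d) := by
            rw [Finset.sum_const, card_univ, Fintype.card_fin, nsmul_eq_mul]
    have hrL : (r : ℝ) * (L * d) ≤ ((r : ℝ) + 1) * L * d := by
      have : (0:ℝ) ≤ L * d := by positivity
      nlinarith
    have hSig : (∑ i, ((X i).card : ℝ)) ≤ (s0 : ℝ) * (δ0 * d / 2) := by
      have hceil : (2 * ((r : ℝ) + 1) * L) / (δ0 / 2) ≤ (s0 : ℝ) := Nat.le_ceil _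
      have h2 : (2 * ((r : ℝ) + 1) * L) = ((2 * ((r : ℝ) + 1) * L) / (δ0 / 2)) * (δ0 / 2) := by
        field_simp
      have h3 : (2 * ((r : ℝ) + 1) * L) * (d / 2) ≤ (s0 : ℝ) * (δ0 / 2) * (d / 2) := by
        rw [h2]
        have hδ2 : (0:ℝ) ≤ δ0 / 2 := by positivity
        have hd2 : (0:ℝ) ≤ d / 2 := by positivity
        gcongr
      calc (∑ i, ((X i).card : ℝ)) ≤ (r : ℝ) * (L * d) := hSigle
        _ ≤ ((r : ℝ) + 1) * L * d := hrL
        _ = (2 * ((r : ℝ) + 1) * L) * (d / 2) := by ring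
        _ ≤ (s0 : ℝ) * (δ0 / 2) * (d / 2) := h3
        _ ≤ (s0 : ℝ) * (δ0 * d / 2) := by
            have h5 : (0:ℝ) ≤ (s0 : ℝ) * δ0 * d := by positivity
            nlinarith [h5]
    have hsep' : ∀ i : Fin r, ∀ b ∈ B, ∀ b' ∈ B, b ≠ b' →
        d / 2 + (∑ i, ((X i).card : ℝ)) / (2 * ((r : ℝ) + 1) * L)
          ≤ (((nbr G b ∩ X i) ∆ (nbr G b' ∩ X i)).card : ℝ) := by
      intro i b hb b' hb' hne
      have h1 := hsep i b hb b' hb' hne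
      have hden : (0:ℝ) < 2 * ((r : ℝ) + 1) * L := by positivity
      have h2 : (∑ i, ((X i).card : ℝ)) / (2 * ((r : ℝ) + 1) * L) ≤ d / 2 := by
        rw [div_le_iff₀ hden]
        calc (∑ i, ((X i).card : ℝ)) ≤ (r : ℝ) * (L * d) := hSigle
          _ ≤ ((r : ℝ) + 1) * L * d := hrL
          _ = d / 2 * (2 * ((r : ℝ) + 1) * L) := by ring
      linarith
    exact fuel r t L hL c0 δ0 hδ0 hQ s0 n G X B d hd hX hSig hsep' hB

/-- **Lemma (key lemma for `r` parts).**  For each `α > 0` and `r, t ∈ ℕ` there exist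
`c ∈ ℕ` and `δ > 0` such that: if `G` is a graph on `n` vertices, `(S 1, …, S r)` is a
partition of `V(G)`, and `B` is a set of at least `c` vertices with
`|(Γ(b) ∩ S j) ∆ (Γ(b') ∩ S j)| ≥ α n` for every `j` and all distinct `b, b' ∈ B`, then
there are `B' ⊆ B` with `|B'| = t` and sets `T i j ⊆ S i` (`i ∈ [r]`, `j ∈ [2^t]`) with
`|T i j| ≥ δ n`, such that: (a) all vertices of each `T i j` have the same neighbourhood
in `B'`; and (b) every transversal `{w 1, …, w (2^t)}` with `w j ∈ T 1 j ∪ … ∪ T r j`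
shatters `B'`. -/
theorem key_lemma_parts (α : ℝ) (hα : 0 < α) (r t : ℕ) :
    ∃ c : ℕ, ∃ δ : ℝ, 0 < δ ∧
      ∀ (n : ℕ) (G : SimpleGraph (Fin n)) (S : Fin r → Finset (Fin n))
        (B : Finset (Fin n)),
        (∀ i j : Fin r, i ≠ j → Disjoint (S i) (S j)) →
        Finset.univ.biUnion S = Finset.univ →
        c ≤ B.card →
        (∀ j : Fin r, ∀ b ∈ B, ∀ b' ∈ B, b ≠ b' →
          α * (n : ℝ) ≤ (((nbr G b ∩ S j) ∆ (nbr G b' ∩ S j)).card : ℝ)) →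
        ∃ B' ⊆ B, B'.card = t ∧
          ∃ T : Fin r → Fin (2 ^ t) → Finset (Fin n),
            (∀ (i : Fin r) (j : Fin (2 ^ t)), T i j ⊆ S i ∧ δ * (n : ℝ) ≤ ((T i j).card : ℝ)) ∧
            (∀ (i : Fin r) (j : Fin (2 ^ t)), ∀ u ∈ T i j, ∀ v ∈ T i j,
              nbr G u ∩ B' = nbr G v ∩ B') ∧
            (∀ w : Fin (2 ^ t) → Fin n, (∀ j, ∃ i, w j ∈ T i j) →
              Shatters G (Finset.univ.image w) B') := by
  classical
  obtain ⟨c, δq, hδq, hQ⟩ := Qmain r t (1 / α) (by positivity)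
  refine ⟨max c 1, δq * α, by positivity, ?_⟩
  intro n G S B hdisj hcover hcB hsep
  rcases Nat.eq_zero_or_pos n with hn | hn
  · exfalso
    subst hn
    have h1 : B.card = 0 := Nat.le_zero.mp (le_trans (card_le_univ B) (by simp))
    have h2 := le_trans (le_max_right c 1) hcB
    omega
  · have hnR : (0:ℝ) < (n : ℝ) := by exact_mod_cast hn
    have hd : (0:ℝ) < α * n := by positivity
    obtain ⟨B', hB'B, hB'card, hatoms⟩ :=
      hQ n G S B (α * n) hd
        (fun i => by
          have h1 : (S i).card ≤ n := by
            have := card_le_univ (S i)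
            simpa using this
          calc ((S i).card : ℝ) ≤ (n : ℝ) := by exact_mod_cast h1
            _ = 1 / α * (α * n) := by field_simp)
        hsep (le_trans (le_max_left c 1) hcB)
    have hpow : B'.powerset.card = 2 ^ t := by rw [card_powerset, hB'card]
    let e : Fin (2 ^ t) ≃ {x // x ∈ B'.powerset} := (Finset.equivFinOfCardEq hpow).symm
    refine ⟨B', hB'B, hB'card,
      fun i j => (S i).filter (fun x => nbr G x ∩ B' = (e j : Finset (Fin n))),
      ?_, ?_, ?_⟩
    · intro i j
      refine ⟨filter_subset _ _, ?_⟩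
      have h1 := hatoms i (e j : Finset (Fin n)) (e j).2
      calc δq * α * (n : ℝ) = δq * (α * n) := by ring
        _ ≤ _ := h1
    · intro i j u hu v hv
      rw [mem_filter] at hu hv
      rw [hu.2, hv.2]
    · intro w hw S0 hS0
      have hS0' : S0 ∈ B'.powerset := mem_powerset.mpr hS0
      obtain ⟨i, hwj⟩ := hw (e.symm ⟨S0, hS0'⟩)
      refine ⟨w (e.symm ⟨S0, hS0'⟩),
        Finset.mem_image_of_mem w (mem_univ _), ?_⟩
      rw [mem_filter] at hwj
      have hpat : nbr G (w (e.symm ⟨S0, hS0'⟩)) ∩ B' = S0 := by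
        rw [hwj.2, e.apply_symm_apply]
      intro b hb
      constructor
      · intro hadj
        have h1 : b ∈ nbr G (w (e.symm ⟨S0, hS0'⟩)) ∩ B' :=
          mem_inter.mpr ⟨mem_nbr.mpr hadj, hb⟩
        rw [hpat] at h1
        exact h1
      · intro hbS
        have h1 : b ∈ nbr G (w (e.symm ⟨S0, hS0'⟩)) ∩ B' := by
          rw [hpat]; exact hbS
        exact mem_nbr.mp (mem_inter.mp h1).1

end ABBM
end

section
/- For each α > 0 and r, t ∈ ℕ, there exist c = c₃(α,r,t) ∈ ℕ and δ = δ₃(c,α,r,t) > 0 such that the following holds. Let G be a graph on n vertices, let (S_1,…,S_r) be a partition of V(G), and let B ⊆ V(G) satisfy |B| ≥ c and |(Γ(b) ∩ S_j) △ (Γ(b') ∩ S_j)| ≥ αn for every j ∈ [r] and all distinct b, b' ∈ B. Then there exist a subset B' ⊆ B with |B'| = 2^{rt}, and sets T^{(i)}_1, …, T^{(i)}_t ⊆ S_i for each i ∈ [r] with |T^{(i)}_j| ≥ δn, such that: (a) if u, v ∈ T^{(i)}_j then Γ(u) ∩ B' = Γ(v) ∩ B'; and (b) if W = {w_{11},…,w_{rt}}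 with w_{ij} ∈ T^{(i)}_j for each i ∈ [r] and j ∈ [t], then B' → W. -/
open scoped symmDiff

namespace ABBM

variable {V : Type*}

private lemma two_mul_pow_le {B : ℕ} (hB : 1 ≤ B) : 2 * (B - 1) ^ B ≤ B ^ B := by
  rcases Nat.lt_or_ge B 2 with h | h
  · interval_cases B <;> norm_num
  · -- real proof via Bernoulli
    have hB1 : (1:ℝ) ≤ (B:ℝ) - 1 := by
      have : (2:ℝ) ≤ (B:ℝ) := by exact_mod_cast h
      linarith
    have hpos : (0:ℝ) < (B:ℝ) - 1 := by linarith
    have hx0 : (0:ℝ) ≤ 1 / ((B:ℝ) - 1) := by positivity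
    have hx : (-2:ℝ) ≤ 1 / ((B:ℝ) - 1) := by linarith
    have hbern := one_add_mul_le_pow hx B
    have h2 : (2:ℝ) ≤ (1 + 1 / ((B:ℝ) - 1)) ^ B := by
      have : (1:ℝ) ≤ (B:ℝ) * (1 / ((B:ℝ)-1)) := by
        rw [mul_one_div, le_div_iff₀ hpos]; linarith
      nlinarith [hbern]
    have key : 2 * ((B:ℝ) - 1) ^ B ≤ (B:ℝ) ^ B := by
      have hexp : ((B:ℝ) - 1) * (1 + 1 / ((B:ℝ) - 1)) = (B:ℝ) := by
        field_simp; ring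
      calc 2 * ((B:ℝ) - 1) ^ B ≤ (1 + 1/((B:ℝ)-1))^B * ((B:ℝ)-1)^B := by
            nlinarith [pow_nonneg hpos.le B]
        _ = (((B:ℝ) - 1) * (1 + 1/((B:ℝ)-1))) ^ B := by rw [mul_pow]; ring
        _ = (B:ℝ) ^ B := by rw [hexp]
    have hcast : ((B - 1 : ℕ) : ℝ) = (B:ℝ) - 1 := by
      have : (1:ℕ) ≤ B := hB
      push_cast [Nat.cast_sub this]; ring
    have : ((2 * (B-1)^B : ℕ) : ℝ) ≤ ((B ^ B : ℕ) : ℝ) := by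
      push_cast [hcast]; exact key
    exact_mod_cast this

private lemma ratio_pow {B Q : ℕ} (hB : 1 ≤ B) :
    4 * Q * (B - 1) ^ (B * (Q + 2)) ≤ B ^ (B * (Q + 2)) := by
  have h1 : 4 * Q ≤ 2 ^ (Q + 2) := by
    have := (Nat.lt_two_pow_self (n := Q)).le
    calc 4 * Q ≤ 4 * 2 ^ Q := by omega
      _ = 2 ^ (Q + 2) := by ring
  calc 4 * Q * (B - 1) ^ (B * (Q + 2))
      = 4 * Q * ((B - 1) ^ B) ^ (Q + 2) := by rw [pow_mul]
    _ ≤ 2 ^ (Q + 2) * ((B - 1) ^ B) ^ (Q + 2) := by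
        exact Nat.mul_le_mul_right _ h1
    _ = (2 * (B - 1) ^ B) ^ (Q + 2) := by rw [mul_pow]
    _ ≤ (B ^ B) ^ (Q + 2) := Nat.pow_le_pow_left (two_mul_pow_le hB) _
    _ = B ^ (B * (Q + 2)) := by rw [← pow_mul]

set_option maxHeartbeats 1600000 in
theorem ind : ∀ (K Q s : ℕ), 1 ≤ Q →
    ∃ c : ℕ, ∀ (V ι : Type) [DecidableEq V] [DecidableEq ι]
      (Λ : Fin K → Finset ι) (w : ι → ℕ) (τ : ι → V → Bool) (D : ℕ) (F : Finset V),
      1 ≤ D → c ≤ F.card →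
      (∀ l, ∑ y ∈ Λ l, w y ≤ Q * D) →
      (∀ l, ∀ b ∈ F, ∀ b' ∈ F, b ≠ b' →
        D ≤ ∑ y ∈ (Λ l).filter (fun y => τ y b ≠ τ y b'), w y) →
      ∃ pick : Fin K → ι, (∀ l, pick l ∈ Λ l) ∧
        ∀ x : Fin K → Bool,
          s ≤ (F.filter fun b => ∀ l, τ (pick l) b = x l).card := by
  intro K
  induction K with
  | zero =>
    intro Q s _
    refine ⟨s, ?_⟩
    intro V ι _ _ Λ w τ D F _ hF _ _
    refine ⟨Fin.elim0, fun l => l.elim0, fun x => ?_⟩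
    simpa using hF
  | succ K ih =>
    intro Q s hQ
    choose cfun hcfun using fun s' => ih Q s' hQ
    set B : ℕ := 2 ^ K with hB
    have hB1 : 1 ≤ B := Nat.one_le_two_pow
    set d : ℕ := B * (Q + 2) with hd
    have hd1 : 1 ≤ d := Nat.mul_pos hB1 (by omega)
    set M0 : ℕ := 4 * (Q * s * d + 1) with hM0
    have hM01 : 1 ≤ M0 := by omega
    let Mlev : ℕ → ℕ := fun j => Nat.rec M0 (fun _ p => cfun p) j
    have hMlev0 : Mlev 0 = M0 := rfl
    have hMlevS : ∀ j, Mlev (j+1) = cfun (Mlev j) := fun _ => rfl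
    refine ⟨Mlev d, ?_⟩
    intro V ι _ _ Λ w τ D F hD hF htot hsep
    by_contra hcon
    push_neg at hcon
    set ΛK := Λ (Fin.last K) with hΛK
    -- per-leaf separated-pair count
    set sep : ι → Finset V → ℕ :=
      fun y L => (L.offDiag.filter fun p => τ y p.1 ≠ τ y p.2).card with hsep'
    set U : ℕ → ℕ := fun j => (B-1)^j * (M0*M0) + 2*s*M0*(j*B^j) with hU
    have tree : ∀ j, ∀ R : Finset V, R ⊆ F → Mlev j ≤ R.card →
        ∃ 𝒞 : Finset (Finset V),
          (∀ L ∈ 𝒞, L ⊆ R ∧ L.card = M0) ∧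
          (∀ L ∈ 𝒞, ∀ L' ∈ 𝒞, L ≠ L' → Disjoint L L') ∧
          𝒞.card = B ^ j ∧
          (∀ y ∈ ΛK, ∑ L ∈ 𝒞, sep y L ≤ U j) := by
      intro j
      induction j with
      | zero =>
        intro R hRF hR
        rw [hMlev0] at hR
        obtain ⟨L, hLR, hLcard⟩ := Finset.exists_subset_card_eq hR
        refine ⟨{L}, ?_, ?_, by simp, ?_⟩
        · intro L' hL'; simp only [Finset.mem_singleton] at hL'; subst hL'
          exact ⟨hLR, hLcard⟩
        · intro L' hL' L'' hL''; simp only [Finset.mem_singleton] at hL' hL''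
          subst hL'; subst hL''; intro h; exact absurd rfl h
        · intro y hy
          simp only [Finset.sum_singleton]
          calc sep y L ≤ L.offDiag.card := Finset.card_filter_le _ _
            _ = L.card * L.card - L.card := Finset.offDiag_card L
            _ ≤ M0 * M0 := by rw [hLcard]; exact Nat.sub_le _ _
            _ ≤ U 0 := by simp [hU]
      | succ j jih =>
        intro R hRF hR
        rw [hMlevS j] at hR
        have hRcard : cfun (Mlev j) ≤ R.card := hR
        obtain ⟨pick', hpickmem, hatoms⟩ :=
          hcfun (Mlev j) V ι (fun l => Λ l.castSucc) w τ D R hD hRcard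
            (fun l => htot l.castSucc)
            (fun l b hb b' hb' hne => hsep l.castSucc b (hRF hb) b' (hRF hb') hne)
        set A : (Fin K → Bool) → Finset V :=
          fun x => R.filter fun b => ∀ l, τ (pick' l) b = x l with hA
        have hAsub : ∀ x, A x ⊆ R := fun x => Finset.filter_subset _ _
        have hAdisj : ∀ x x', x ≠ x' → Disjoint (A x) (A x') := by
          intro x x' hne
          rw [Finset.disjoint_left]
          intro b hb hb'
          simp only [hA, Finset.mem_filter] at hb hb'
          exact hne (funext fun l => (hb.2 l).symm.trans (hb'.2 l))
        choose 𝒞x hleaf hdisl hcardl hsum using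
          fun x => jih (A x) ((hAsub x).trans hRF) (hatoms x)
        have hcoldisj : ∀ x ∈ (Finset.univ : Finset (Fin K → Bool)),
            ∀ x' ∈ (Finset.univ : Finset (Fin K → Bool)), x ≠ x' →
            Disjoint (𝒞x x) (𝒞x x') := by
          intro x _ x' _ hne
          rw [Finset.disjoint_left]
          intro L hL hL'
          have h1 := (hleaf x L hL)
          have h2 := (hleaf x' L hL')
          have hLne : L.Nonempty := by
            rw [← Finset.card_pos, h1.2]; omega
          obtain ⟨b, hb⟩ := hLne
          exact (Finset.disjoint_left.mp (hAdisj x x' hne)) (h1.1 hb) (h2.1 hb)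
        refine ⟨Finset.univ.biUnion 𝒞x, ?_, ?_, ?_, ?_⟩
        · intro L hL
          obtain ⟨x, _, hLx⟩ := Finset.mem_biUnion.mp hL
          exact ⟨((hleaf x L hLx).1).trans (hAsub x), (hleaf x L hLx).2⟩
        · intro L hL L' hL' hne
          obtain ⟨x, _, hLx⟩ := Finset.mem_biUnion.mp hL
          obtain ⟨x', _, hLx'⟩ := Finset.mem_biUnion.mp hL'
          rcases eq_or_ne x x' with rfl | hxx
          · exact hdisl x L hLx L' hLx' hne
          · exact Finset.disjoint_of_subset_left (hleaf x L hLx).1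
              (Finset.disjoint_of_subset_right (hleaf x' L' hLx').1 (hAdisj x x' hxx))
        · rw [Finset.card_biUnion hcoldisj]
          simp only [hcardl, Finset.sum_const, Finset.card_univ, smul_eq_mul]
          have : Fintype.card (Fin K → Bool) = B := by
            simp [hB, Fintype.card_fun]
          rw [this]; ring
        · intro y hy
          -- find bad atom
          have hbad : ∃ x v, ((A x).filter fun b => τ y b = v).card < s := by
            by_contra hgood
            push_neg at hgood
            set pickS : Fin (K+1) → ι := Fin.snoc pick' y with hpickS
            have hpc : ∀ i : Fin K, pickS i.castSucc = pick' i := by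
              intro i; simp [hpickS]
            have hpl : pickS (Fin.last K) = y := by simp [hpickS]
            obtain ⟨x₀, hx₀⟩ := hcon pickS (by
              intro l
              refine Fin.lastCases ?_ ?_ l
              · rw [hpl]; exact hy
              · intro i; rw [hpc i]; exact hpickmem i)
            refine absurd hx₀ (not_lt.mpr ?_)
            calc s ≤ ((A (fun l => x₀ l.castSucc)).filter
                  fun b => τ y b = x₀ (Fin.last K)).card := hgood _ _
              _ ≤ (F.filter fun b => ∀ l, τ (pickS l) b = x₀ l).card := by
                  apply Finset.card_le_card
                  intro b hb
                  simp only [hA, Finset.mem_filter] at hb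
                  refine Finset.mem_filter.mpr ⟨hRF hb.1.1, ?_⟩
                  intro l
                  refine Fin.lastCases ?_ ?_ l
                  · rw [hpl]; exact hb.2
                  · intro i; rw [hpc i]; exact hb.1.2 i
          obtain ⟨xb, v, hsmall⟩ := hbad
          have hsplit : ∑ L ∈ Finset.univ.biUnion 𝒞x, sep y L
              = ∑ x : (Fin K → Bool), ∑ L ∈ 𝒞x x, sep y L := by
            refine Finset.sum_biUnion ?_
            intro x _ x' _ hne
            exact hcoldisj x (Finset.mem_univ x) x' (Finset.mem_univ x') hne
          rw [hsplit]
          have hbadsum : ∑ L ∈ 𝒞x xb, sep y L ≤ 2 * s * M0 := by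
            have hperL : ∀ L ∈ 𝒞x xb,
                sep y L ≤ 2 * M0 * (L.filter fun b => τ y b = v).card := by
              intro L hL
              have hLcard := (hleaf xb L hL).2
              have hsub : (L.offDiag.filter fun p => τ y p.1 ≠ τ y p.2) ⊆
                  ((L.filter fun b => τ y b = v) ×ˢ L) ∪
                  (L ×ˢ (L.filter fun b => τ y b = v)) := by
                intro p hp
                simp only [Finset.mem_filter, Finset.mem_offDiag] at hp
                obtain ⟨⟨h1, h2, _⟩, hne⟩ := hp
                have hcase : ∀ (v a b : Bool), a ≠ b → a = v ∨ b = v := by decide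
                rcases hcase v _ _ hne with he | he
                · exact Finset.mem_union_left _
                    (Finset.mem_product.mpr ⟨Finset.mem_filter.mpr ⟨h1, he⟩, h2⟩)
                · exact Finset.mem_union_right _
                    (Finset.mem_product.mpr ⟨h1, Finset.mem_filter.mpr ⟨h2, he⟩⟩)
              calc sep y L ≤ _ := Finset.card_le_card hsub
                _ ≤ ((L.filter fun b => τ y b = v) ×ˢ L).card +
                    (L ×ˢ (L.filter fun b => τ y b = v)).card := Finset.card_union_le _ _
                _ = 2 * M0 * (L.filter fun b => τ y b = v).card := by
                    rw [Finset.card_product, Finset.card_product, hLcard]; ring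
            have htotv : ∑ L ∈ 𝒞x xb, (L.filter fun b => τ y b = v).card ≤ s := by
              have hdisjf : ∀ L ∈ 𝒞x xb, ∀ L' ∈ 𝒞x xb, L ≠ L' →
                  Disjoint (L.filter fun b => τ y b = v) (L'.filter fun b => τ y b = v) := by
                intro L hL L' hL' hne
                exact Finset.disjoint_filter_filter (hdisl xb L hL L' hL' hne)
              calc ∑ L ∈ 𝒞x xb, (L.filter fun b => τ y b = v).card
                  = ((𝒞x xb).biUnion fun L => L.filter fun b => τ y b = v).card :=
                    (Finset.card_biUnion hdisjf).symm
                _ ≤ ((A xb).filter fun b => τ y b = v).card := by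
                    apply Finset.card_le_card
                    intro b hb
                    obtain ⟨L, hL, hbL⟩ := Finset.mem_biUnion.mp hb
                    simp only [Finset.mem_filter] at hbL ⊢
                    exact ⟨(hleaf xb L hL).1 hbL.1, hbL.2⟩
                _ ≤ s := le_of_lt hsmall
            calc ∑ L ∈ 𝒞x xb, sep y L
                ≤ ∑ L ∈ 𝒞x xb, 2 * M0 * (L.filter fun b => τ y b = v).card :=
                  Finset.sum_le_sum hperL
              _ = 2 * M0 * ∑ L ∈ 𝒞x xb, (L.filter fun b => τ y b = v).card := by
                  rw [Finset.mul_sum]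
              _ ≤ 2 * M0 * s := Nat.mul_le_mul_left _ htotv
              _ = 2 * s * M0 := by ring
          have hrest : ∑ x ∈ Finset.univ.erase xb, ∑ L ∈ 𝒞x x, sep y L
              ≤ (B - 1) * U j := by
            calc ∑ x ∈ Finset.univ.erase xb, ∑ L ∈ 𝒞x x, sep y L
                ≤ ∑ _x ∈ Finset.univ.erase xb, U j :=
                  Finset.sum_le_sum (fun x _ => hsum x y hy)
              _ = (Finset.univ.erase xb).card * U j := by
                  rw [Finset.sum_const, smul_eq_mul]
              _ = (B - 1) * U j := by
                  rw [Finset.card_erase_of_mem (Finset.mem_univ xb), Finset.card_univ]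
                  congr 1
                  simp [hB, Fintype.card_fun]
          have hsum_split : ∑ x : (Fin K → Bool), ∑ L ∈ 𝒞x x, sep y L
              = (∑ x ∈ Finset.univ.erase xb, ∑ L ∈ 𝒞x x, sep y L)
                + ∑ L ∈ 𝒞x xb, sep y L := by
            rw [Finset.sum_erase_add _ _ (Finset.mem_univ xb)]
          rw [hsum_split]
          have harith : (B - 1) * U j + 2 * s * M0 ≤ U (j+1) := by
            simp only [hU]
            have h1 : (B-1) * ((B-1)^j * (M0*M0)) = (B-1)^(j+1) * (M0*M0) := by ring
            have hBj : 1 ≤ B ^ (j+1) := Nat.one_le_pow _ _ (by omega)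
            have h2 : (B-1) * (2*s*M0*(j*B^j)) + 2*s*M0 ≤ 2*s*M0*((j+1)*B^(j+1)) := by
              have hstep : (B-1) * (j * B^j) + 1 ≤ (j+1) * B^(j+1) := by
                have : (B-1) * (j * B^j) ≤ j * B^(j+1) := by
                  calc (B-1) * (j * B^j) ≤ B * (j * B^j) :=
                      Nat.mul_le_mul_right _ (by omega)
                    _ = j * B^(j+1) := by ring
                calc (B-1) * (j * B^j) + 1 ≤ j * B^(j+1) + B^(j+1) := by omega
                  _ = (j+1) * B^(j+1) := by ring
              calc (B-1) * (2*s*M0*(j*B^j)) + 2*s*M0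
                  = 2*s*M0 * ((B-1) * (j*B^j) + 1) := by ring
                _ ≤ 2*s*M0 * ((j+1)*B^(j+1)) := Nat.mul_le_mul_left _ hstep
            calc (B-1) * ((B-1)^j * (M0*M0) + 2*s*M0*(j*B^j)) + 2*s*M0
                = (B-1)^(j+1) * (M0*M0) + ((B-1) * (2*s*M0*(j*B^j)) + 2*s*M0) := by ring
              _ ≤ (B-1)^(j+1) * (M0*M0) + 2*s*M0*((j+1)*B^(j+1)) := by omega
          omega
    -- root application
    obtain ⟨𝒞, hleafF, hdisjF, hcardF, hsumF⟩ := tree d F (subset_refl F) hF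
    -- lower bound per leaf
    have hlow : ∀ L ∈ 𝒞, D * (M0 * M0 - M0) ≤ ∑ y ∈ ΛK, w y * sep y L := by
      intro L hL
      have hLF : L ⊆ F := (hleafF L hL).1
      have hLcard : L.card = M0 := (hleafF L hL).2
      have hrw : ∀ y, w y * sep y L
          = ∑ p ∈ L.offDiag, if τ y p.1 ≠ τ y p.2 then w y else 0 := by
        intro y
        simp only [hsep']
        rw [Finset.card_filter, Finset.mul_sum]
        congr 1; funext p
        by_cases h : τ y p.1 ≠ τ y p.2 <;> simp [h]
      calc D * (M0 * M0 - M0) = ∑ _p ∈ L.offDiag, D := by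
            rw [Finset.sum_const, smul_eq_mul, Finset.offDiag_card, hLcard, mul_comm]
        _ ≤ ∑ p ∈ L.offDiag, ∑ y ∈ ΛK, (if τ y p.1 ≠ τ y p.2 then w y else 0) := by
            apply Finset.sum_le_sum
            intro p hp
            rw [Finset.mem_offDiag] at hp
            have := hsep (Fin.last K) p.1 (hLF hp.1) p.2 (hLF hp.2.1) hp.2.2
            calc D ≤ ∑ y ∈ ΛK.filter (fun y => τ y p.1 ≠ τ y p.2), w y := this
              _ = ∑ y ∈ ΛK, (if τ y p.1 ≠ τ y p.2 then w y else 0) :=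
                  Finset.sum_filter _ _
        _ = ∑ y ∈ ΛK, w y * sep y L := by
            rw [Finset.sum_comm]
            exact Finset.sum_congr rfl (fun y _ => (hrw y).symm)
    -- combine
    have hlower : (B ^ d) * (D * (M0 * M0 - M0)) ≤ ∑ y ∈ ΛK, w y * (∑ L ∈ 𝒞, sep y L) := by
      have : ∑ y ∈ ΛK, w y * (∑ L ∈ 𝒞, sep y L)
          = ∑ L ∈ 𝒞, ∑ y ∈ ΛK, w y * sep y L := by
        rw [Finset.sum_comm]
        exact Finset.sum_congr rfl (fun y _ => Finset.mul_sum _ _ _)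
      rw [this]
      calc (B ^ d) * (D * (M0 * M0 - M0)) = ∑ _L ∈ 𝒞, D * (M0 * M0 - M0) := by
            rw [Finset.sum_const, smul_eq_mul, hcardF]
        _ ≤ _ := Finset.sum_le_sum hlow
    have hupper : ∑ y ∈ ΛK, w y * (∑ L ∈ 𝒞, sep y L) ≤ (Q * D) * U d := by
      calc ∑ y ∈ ΛK, w y * (∑ L ∈ 𝒞, sep y L)
          ≤ ∑ y ∈ ΛK, w y * U d :=
            Finset.sum_le_sum (fun y hy => Nat.mul_le_mul_left _ (hsumF y hy))
        _ = (∑ y ∈ ΛK, w y) * U d := by rw [Finset.sum_mul]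
        _ ≤ (Q * D) * U d := Nat.mul_le_mul_right _ (htot (Fin.last K))
    -- final arithmetic contradiction
    have hkey : 4 * Q * (B - 1) ^ d ≤ B ^ d := ratio_pow hB1
    have hfinal : (Q * D) * U d < (B ^ d) * (D * (M0 * M0 - M0)) := by
      have hstrict : Q * U d < B ^ d * (M0 * M0 - M0) := by
        have hUle : 4 * (Q * U d) ≤ B^d * (M0*M0) + 8 * (Q*s*d) * M0 * B^d := by
          simp only [hU]
          calc 4 * (Q * ((B-1)^d * (M0*M0) + 2*s*M0*(d*B^d)))
              = (4 * Q * (B-1)^d) * (M0*M0) + 8*(Q*s*d)*M0*B^d := by ring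
            _ ≤ B^d * (M0*M0) + 8*(Q*s*d)*M0*B^d := by
                have := Nat.mul_le_mul_right (M0*M0) hkey
                omega
        have hax : M0 * M0 + 8 * (Q*s*d) * M0 + 4 * M0 < 4 * (M0 * M0) := by
          set e := Q * s * d with he
          have : M0 = 4 * e + 4 := by omega
          nlinarith [this]
        have hBd : 1 ≤ B ^ d := Nat.one_le_pow _ _ (by omega)
        have hXM : M0 * M0 - M0 + M0 = M0 * M0 := by
          have : M0 ≤ M0 * M0 := Nat.le_mul_of_pos_left _ (by omega)
          omega
        -- 4*(Q * U d) + 4*M0*B^d < 4*(B^d*(M0*M0-M0)) + 4*M0*B^d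
        have h2 : 4 * (Q * U d) + 4 * M0 * B ^ d < 4 * (B ^ d * (M0*M0)) := by
          calc 4 * (Q * U d) + 4 * M0 * B ^ d
              ≤ B^d * (M0*M0) + 8*(Q*s*d)*M0*B^d + 4*M0*B^d := by omega
            _ = B^d * (M0*M0 + 8*(Q*s*d)*M0 + 4*M0) := by ring
            _ < B^d * (4 * (M0*M0)) := mul_lt_mul_of_pos_left hax hBd
            _ = 4 * (B^d * (M0*M0)) := by ring
        have h3 : 4 * (B ^ d * (M0*M0)) = 4 * (B^d * (M0*M0 - M0)) + 4 * M0 * B^d := by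
          calc 4 * (B ^ d * (M0*M0)) = 4 * (B^d * ((M0*M0 - M0) + M0)) := by rw [hXM]
            _ = 4 * (B^d * (M0*M0 - M0)) + 4 * M0 * B^d := by ring
        omega
      calc (Q * D) * U d = D * (Q * U d) := by ring
        _ < D * (B ^ d * (M0 * M0 - M0)) := mul_lt_mul_of_pos_left hstrict hD
        _ = (B ^ d) * (D * (M0 * M0 - M0)) := by ring
    exact absurd (le_trans hlower hupper) (not_le.mpr hfinal)


set_option maxHeartbeats 1600000 in
/-- **Lemma (key lemma, reversed form).** -/
theorem key_lemma_reversed (α : ℝ) (hα : 0 < α) (r t : ℕ) :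
    ∃ c : ℕ, ∃ δ : ℝ, 0 < δ ∧
      ∀ (n : ℕ) (G : SimpleGraph (Fin n)) (S : Fin r → Finset (Fin n))
        (B : Finset (Fin n)),
        (∀ i j : Fin r, i ≠ j → Disjoint (S i) (S j)) →
        Finset.univ.biUnion S = Finset.univ →
        c ≤ B.card →
        (∀ j : Fin r, ∀ b ∈ B, ∀ b' ∈ B, b ≠ b' →
          α * (n : ℝ) ≤ (((nbr G b ∩ S j) ∆ (nbr G b' ∩ S j)).card : ℝ)) →
        ∃ B' ⊆ B, B'.card = 2 ^ (r * t) ∧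
          ∃ T : Fin r → Fin t → Finset (Fin n),
            (∀ (i : Fin r) (j : Fin t), T i j ⊆ S i ∧ δ * (n : ℝ) ≤ ((T i j).card : ℝ)) ∧
            (∀ (i : Fin r) (j : Fin t), ∀ u ∈ T i j, ∀ v ∈ T i j,
              nbr G u ∩ B' = nbr G v ∩ B') ∧
            (∀ w : Fin r → Fin t → Fin n, (∀ i j, w i j ∈ T i j) →
              Shatters G B'
                (Finset.univ.image fun p : Fin r × Fin t => w p.1 p.2)) := by
  classical
  set K := r * t with hK
  set Q : ℕ := ⌈(2:ℝ)/α⌉₊ + 1 with hQdef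
  obtain ⟨c₀, hind⟩ := ind K Q 1 (by omega)
  set c : ℕ := max c₀ 1 with hc
  set δ : ℝ := α / 2 ^ (c + 1) with hδ
  have hδpos : 0 < δ := by positivity
  refine ⟨c, δ, hδpos, ?_⟩
  intro n G S B _ _ hBcard hsepmain
  obtain ⟨B₀, hB₀B, hB₀card⟩ := Finset.exists_subset_card_eq hBcard
  have hB₀ne : B₀.Nonempty := by
    rw [← Finset.card_pos, hB₀card]
    exact lt_of_lt_of_le one_pos (le_max_right c₀ 1)
  have hn1 : 0 < n := hB₀ne.choose.pos
  have hnR : (0:ℝ) < (n:ℝ) := by exact_mod_cast hn1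
  have mem_nbr : ∀ (u v : Fin n), v ∈ nbr G u ↔ G.Adj u v := by
    intro u v; simp [nbr]
  -- trace machinery
  set tr : Fin n → Finset (Fin n) := fun u => (nbr G u) ∩ B₀ with htr
  set cls : Fin r → Finset (Fin n) → Finset (Fin n) :=
    fun i A => (S i).filter (fun v => tr v = A) with hcls
  set Lg : Fin r → Finset (Fin n) → Prop :=
    fun i A => δ * (n:ℝ) ≤ ((cls i A).card : ℝ) with hLg
  set w : Fin r × Finset (Fin n) → ℕ := fun y => (cls y.1 y.2).card with hw
  set τ : Fin r × Finset (Fin n) → Fin n → Bool := fun y b => decide (b ∈ y.2) with hτ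
  set e : Fin r × Fin t ≃ Fin K := finProdFinEquiv with he
  set pt : Fin K → Fin r := fun l => (e.symm l).1 with hpt
  set Λ : Fin K → Finset (Fin r × Finset (Fin n)) :=
    fun l => (((S (pt l)).image tr).filter (Lg (pt l))).image (fun A => (pt l, A)) with hΛ
  set D : ℕ := ⌈α * (n:ℝ) / 2⌉₊ with hDdef
  have hDlow : α * (n:ℝ) / 2 ≤ (D:ℝ) := Nat.le_ceil _
  have hD1 : 1 ≤ D := Nat.ceil_pos.mpr (by positivity)
  -- fiber sums
  have hsum_fiber : ∀ (i : Fin r) (P : Finset (Fin n) → Prop) [DecidablePred P],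
      ∑ A ∈ ((S i).image tr).filter P, (cls i A).card
        = ((S i).filter (fun v => P (tr v))).card := by
    intro i P _
    have hmem : ∀ v ∈ (S i).filter (fun v => P (tr v)),
        tr v ∈ ((S i).image tr).filter P := by
      intro v hv
      rw [Finset.mem_filter] at hv ⊢
      exact ⟨Finset.mem_image_of_mem tr hv.1, hv.2⟩
    rw [Finset.card_eq_sum_card_fiberwise hmem]
    apply Finset.sum_congr rfl
    intro A hA
    rw [Finset.mem_filter] at hA
    congr 1
    ext v
    simp only [hcls, Finset.mem_filter]
    constructor
    · rintro ⟨hvS, htv⟩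
      exact ⟨⟨hvS, htv ▸ hA.2⟩, htv⟩
    · rintro ⟨⟨hvS, _⟩, htv⟩
      exact ⟨hvS, htv⟩
  have hvals : ∀ i : Fin r, ((S i).image tr).card ≤ 2 ^ c := by
    intro i
    calc ((S i).image tr).card ≤ B₀.powerset.card := by
          apply Finset.card_le_card
          intro A hA
          obtain ⟨v, -, rfl⟩ := Finset.mem_image.mp hA
          exact Finset.mem_powerset.mpr Finset.inter_subset_right
      _ = 2 ^ c := by rw [Finset.card_powerset, hB₀card]
  have hScard : ∀ i, (S i).card ≤ n := by
    intro i
    simpa using Finset.card_le_univ (S i)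
  have hQD : n ≤ Q * D := by
    have hQge : (2:ℝ)/α ≤ (Q:ℝ) := by
      rw [hQdef]
      push_cast
      linarith [Nat.le_ceil ((2:ℝ)/α)]
    have hR : (n:ℝ) ≤ (Q:ℝ) * (D:ℝ) := by
      have heq : (n:ℝ) = (2/α) * (α * n / 2) := by field_simp
      rw [heq]
      exact mul_le_mul hQge hDlow (by positivity) (le_trans (by positivity) hQge)
    exact_mod_cast hR
  have htot : ∀ l : Fin K, ∑ y ∈ Λ l, w y ≤ Q * D := by
    intro l
    have h1 : ∑ y ∈ Λ l, w y
        = ∑ A ∈ ((S (pt l)).image tr).filter (Lg (pt l)), (cls (pt l) A).card := by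
      rw [hΛ]
      rw [Finset.sum_image (by intro x _ y _ hxy; exact (Prod.mk.injEq _ _ _ _).mp hxy |>.2)]
    rw [h1, hsum_fiber]
    calc ((S (pt l)).filter _).card ≤ (S (pt l)).card :=
          Finset.card_le_card (Finset.filter_subset _ _)
      _ ≤ n := hScard _
      _ ≤ Q * D := hQD
  -- membership translation
  have hmemtr : ∀ (b : Fin n), b ∈ B₀ → ∀ v, (b ∈ tr v ↔ G.Adj b v) := by
    intro b hb v
    simp only [htr, Finset.mem_inter, mem_nbr]
    rw [G.adj_comm]
    exact ⟨fun h => h.1, fun h => ⟨h, hb⟩⟩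
  have hdiffset : ∀ (i : Fin r) (b b' : Fin n), b ∈ B₀ → b' ∈ B₀ →
      (nbr G b ∩ S i) ∆ (nbr G b' ∩ S i)
        = (S i).filter (fun v => decide (b ∈ tr v) ≠ decide (b' ∈ tr v)) := by
    intro i b b' hb hb'
    ext v
    simp only [Finset.mem_symmDiff, Finset.mem_inter, Finset.mem_filter, mem_nbr,
      ne_eq, decide_eq_decide, hmemtr b hb v, hmemtr b' hb' v]
    tauto
  have hsepIND : ∀ l : Fin K, ∀ b ∈ B₀, ∀ b' ∈ B₀, b ≠ b' →
      D ≤ ∑ y ∈ (Λ l).filter (fun y => τ y b ≠ τ y b'), w y := by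
    intro l b hb b' hb' hbb
    have himg : (Λ l).filter (fun y => τ y b ≠ τ y b')
        = (((S (pt l)).image tr).filter
            (fun A => Lg (pt l) A ∧ decide (b ∈ A) ≠ decide (b' ∈ A))).image
            (fun A => (pt l, A)) := by
      rw [hΛ, Finset.filter_image, Finset.filter_filter]
    have hstep1 : ∑ y ∈ (Λ l).filter (fun y => τ y b ≠ τ y b'), w y
        = ∑ A ∈ ((S (pt l)).image tr).filter
            (fun A => Lg (pt l) A ∧ decide (b ∈ A) ≠ decide (b' ∈ A)), (cls (pt l) A).card := by
      rw [himg,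
        Finset.sum_image (by intro x _ y _ hxy; exact (Prod.mk.injEq _ _ _ _).mp hxy |>.2)]
    rw [hstep1, hsum_fiber]
    set N1 := ((S (pt l)).filter
      (fun v => Lg (pt l) (tr v) ∧ decide (b ∈ tr v) ≠ decide (b' ∈ tr v))).card with hN1
    set Dif := (S (pt l)).filter
      (fun v => decide (b ∈ tr v) ≠ decide (b' ∈ tr v)) with hDif
    have h1 : α * n ≤ (Dif.card : ℝ) := by
      rw [hDif, ← hdiffset (pt l) b b' hb hb']
      exact hsepmain (pt l) b (hB₀B hb) b' (hB₀B hb') hbb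
    set N2 := ((S (pt l)).filter
      (fun v => (decide (b ∈ tr v) ≠ decide (b' ∈ tr v)) ∧ ¬ Lg (pt l) (tr v))).card with hN2
    have hsplit : Dif.card ≤ N1 + N2 := by
      rw [hN1, hN2, hDif]
      have h := Finset.card_filter_add_card_filter_not
        (s := (S (pt l)).filter (fun v => decide (b ∈ tr v) ≠ decide (b' ∈ tr v)))
        (p := fun v => Lg (pt l) (tr v))
      have e1 : ((S (pt l)).filter
            (fun v => decide (b ∈ tr v) ≠ decide (b' ∈ tr v))).filter
            (fun v => Lg (pt l) (tr v))
          = (S (pt l)).filter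
            (fun v => Lg (pt l) (tr v) ∧ decide (b ∈ tr v) ≠ decide (b' ∈ tr v)) := by
        rw [Finset.filter_filter]
        ext v
        simp only [Finset.mem_filter]
        tauto
      have e2 : ((S (pt l)).filter
            (fun v => decide (b ∈ tr v) ≠ decide (b' ∈ tr v))).filter
            (fun v => ¬ Lg (pt l) (tr v))
          = (S (pt l)).filter
            (fun v => (decide (b ∈ tr v) ≠ decide (b' ∈ tr v)) ∧ ¬ Lg (pt l) (tr v)) := by
        rw [Finset.filter_filter]
      rw [e1, e2] at h
      omega
    have hN2small : (N2 : ℝ) ≤ 2^c * (δ * n) := by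
      set Vs := ((S (pt l)).image tr).filter
          (fun A => (decide (b ∈ A) ≠ decide (b' ∈ A)) ∧ ¬ Lg (pt l) A) with hVs
      have h2' : N2 = ∑ A ∈ Vs, (cls (pt l) A).card := by
        rw [hN2, hVs]
        exact (hsum_fiber (pt l)
          (fun A => (decide (b ∈ A) ≠ decide (b' ∈ A)) ∧ ¬ Lg (pt l) A)).symm
      rw [h2']
      have hub : ∀ A ∈ Vs, ((cls (pt l) A).card : ℝ) ≤ δ * n := by
        intro A hA
        rw [hVs, Finset.mem_filter] at hA
        have h4 := hA.2.2
        rw [hLg] at h4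
        exact (not_le.mp h4).le
      have hcV : (Vs.card : ℝ) ≤ (2^c : ℝ) := by
        have h5 : Vs.card ≤ 2 ^ c := by
          refine le_trans (Finset.card_le_card ?_) (hvals (pt l))
          rw [hVs]; exact Finset.filter_subset _ _
        exact_mod_cast h5
      calc ((∑ A ∈ Vs, (cls (pt l) A).card : ℕ) : ℝ)
          = ∑ A ∈ Vs, ((cls (pt l) A).card : ℝ) := by push_cast; rfl
        _ ≤ ∑ _A ∈ Vs, (δ * n) := Finset.sum_le_sum hub
        _ = Vs.card * (δ * n) := by rw [Finset.sum_const, nsmul_eq_mul]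
        _ ≤ 2^c * (δ * n) := mul_le_mul_of_nonneg_right hcV (by positivity)
    have hpow : (2:ℝ)^c * (δ * n) = α * n / 2 := by
      rw [hδ]
      have : (2:ℝ) ^ (c+1) = 2 * 2^c := by ring
      rw [this]
      have h2c : (2:ℝ)^c ≠ 0 := by positivity
      field_simp
    have hfin : α * n / 2 ≤ (N1 : ℝ) := by
      have hcast : (Dif.card : ℝ) ≤ (N1 : ℝ) + (N2 : ℝ) := by exact_mod_cast hsplit
      rw [hpow] at hN2small
      linarith
    exact Nat.ceil_le.mpr hfin
  -- apply the abstract theorem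
  obtain ⟨pick, hpickmem, hatoms⟩ := hind (Fin n) (Fin r × Finset (Fin n)) Λ w τ D B₀
    hD1 (le_trans (le_max_left c₀ 1) (le_of_eq hB₀card.symm)) htot hsepIND
  -- the classes
  set Acl : Fin r → Fin t → Finset (Fin n) := fun i j => (pick (e (i,j))).2 with hAcl
  set T : Fin r → Fin t → Finset (Fin n) := fun i j => cls i (Acl i j) with hT
  have hTprop : ∀ (i : Fin r) (j : Fin t),
      Acl i j ∈ (S i).image tr ∧ Lg i (Acl i j) := by
    intro i j
    have hm := hpickmem (e (i,j))
    rw [hΛ] at hm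
    obtain ⟨A, hA, hAeq⟩ := Finset.mem_image.mp hm
    rw [Finset.mem_filter] at hA
    have hpt_e : pt (e (i,j)) = i := by
      rw [hpt]; simp [he]
    have h2 : Acl i j = A := by
      show (pick (e (i,j))).2 = A
      rw [← hAeq]
    rw [h2, ← hpt_e]
    exact ⟨hA.1, hA.2⟩
  -- atom representatives
  have hne : ∀ x : Fin K → Bool,
      (B₀.filter (fun b => ∀ l, τ (pick l) b = x l)).Nonempty := by
    intro x
    rw [← Finset.card_pos]
    exact lt_of_lt_of_le one_pos (hatoms x)
  set rep : (Fin K → Bool) → Fin n := fun x => (hne x).choose with hrep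
  have hrepmem : ∀ x, rep x ∈ B₀ ∧ ∀ l, τ (pick l) (rep x) = x l := by
    intro x
    have := (hne x).choose_spec
    rw [Finset.mem_filter] at this
    exact this
  have hinj : Function.Injective rep := by
    intro x x' hxx
    funext l
    rw [← (hrepmem x).2 l, hxx, (hrepmem x').2 l]
  set B' : Finset (Fin n) := Finset.univ.image rep with hB'
  have hB'sub : B' ⊆ B := by
    intro b hb
    obtain ⟨x, -, rfl⟩ := Finset.mem_image.mp hb
    exact hB₀B (hrepmem x).1
  have hB'B₀ : B' ⊆ B₀ := by
    intro b hb
    obtain ⟨x, -, rfl⟩ := Finset.mem_image.mp hb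
    exact (hrepmem x).1
  have hB'card : B'.card = 2 ^ (r * t) := by
    rw [hB', Finset.card_image_of_injective _ hinj, Finset.card_univ,
      Fintype.card_fun]
    simp [hK]
  -- adjacency dictated by class membership
  have hadj : ∀ (i : Fin r) (j : Fin t) (u : Fin n), u ∈ T i j →
      ∀ b ∈ B₀, (G.Adj u b ↔ b ∈ Acl i j) := by
    intro i j u hu b hb
    rw [hT, hcls, Finset.mem_filter] at hu
    rw [← hu.2]
    rw [G.adj_comm]
    exact (hmemtr b hb u).symm
  refine ⟨B', hB'sub, hB'card, T, ?_, ?_, ?_⟩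
  · intro i j
    constructor
    · rw [hT, hcls]; exact Finset.filter_subset _ _
    · have := (hTprop i j).2
      rw [hLg] at this
      exact this
  · intro i j u hu v hv
    ext b
    simp only [Finset.mem_inter, mem_nbr]
    by_cases hbB' : b ∈ B'
    · have hbB₀ : b ∈ B₀ := hB'B₀ hbB'
      rw [hadj i j u hu b hbB₀, hadj i j v hv b hbB₀]
    · simp [hbB']
  · intro wfn hwfn
    intro Ssub hSsub
    set x : Fin K → Bool := fun l => decide (wfn (e.symm l).1 (e.symm l).2 ∈ Ssub) with hx
    refine ⟨rep x, Finset.mem_image_of_mem rep (Finset.mem_univ x), ?_⟩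
    intro b hb
    obtain ⟨p, -, rfl⟩ := Finset.mem_image.mp hb
    have hu : wfn p.1 p.2 ∈ T p.1 p.2 := hwfn p.1 p.2
    rw [G.adj_comm]
    rw [hadj p.1 p.2 (wfn p.1 p.2) hu (rep x) (hrepmem x).1]
    have h2 := (hrepmem x).2 (e (p.1, p.2))
    rw [hτ] at h2
    rw [hx] at h2
    simp only [Equiv.symm_apply_apply] at h2
    have h3 : (pick (e (p.1, p.2))).2 = Acl p.1 p.2 := rfl
    rw [h3] at h2
    exact decide_eq_decide.mp h2

end ABBM
end

section
/- For each r, t ∈ ℕ, there exist ε > 0 and n_0 = n_0(r,t) ∈ ℕ such that the following holds. Let G be an r-partite graph on vertex set A_1 ∪ … ∪ A_r with |A_1| = … = |A_r| = n ≥ n_0 and e(G) ≥ (1−ε)·(r choose 2)·n², and for each j ∈ [r] let B_j(1) ∪ … ∪ B_j(t) be an equipartition of A_j. Then there exists a copy H of K_r(t) in G (with t vertices of H in each part A_j) such that |V(H) ∩ B_j(k)| ≤ 1 for every j ∈ [r] and k ∈ [t]. -/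
open scoped symmDiff

namespace ABBM

variable {V : Type*}

set_option maxHeartbeats 3200000 in
/-- **Observation (finding a transversal `K_r(t)`).**  For each `r, t ∈ ℕ` there exist
`ε > 0` and `n₀` such that: if `G` is an `r`-partite graph on parts `A 1, …, A r` of common
size `n ≥ n₀`, with at least `(1 - ε) (r choose 2) n²` edges, and each `A j` is
equipartitioned into classes `B j 1, …, B j t`, then `G` contains a copy of `K_r(t)`
(with `t` vertices in each part `A j`) using at most one vertex from each class `B j k`. -/
theorem find_transversal_Krt (r t : ℕ) :
    ∃ ε : ℝ, 0 < ε ∧ ∃ n₀ : ℕ,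
      ∀ (V : Type) [Fintype V] [DecidableEq V] (G : SimpleGraph V) (n : ℕ)
        (A : Fin r → Finset V) (B : Fin r → Fin t → Finset V),
        n₀ ≤ n →
        (∀ i j : Fin r, i ≠ j → Disjoint (A i) (A j)) →
        Finset.univ.biUnion A = Finset.univ →
        (∀ j : Fin r, (A j).card = n) →
        (∀ x y : V, G.Adj x y → ∀ j : Fin r, ¬ (x ∈ A j ∧ y ∈ A j)) →
        (∀ (j : Fin r) (k k' : Fin t), k ≠ k' → Disjoint (B j k) (B j k')) →
        (∀ j : Fin r, Finset.univ.biUnion (B j) = A j) →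
        (∀ (j : Fin r) (k k' : Fin t), (B j k).card ≤ (B j k').card + 1) →
        ((1 - ε) * (r.choose 2 : ℝ) * (n : ℝ) ^ 2 ≤ (G.edgeSet.ncard : ℝ)) →
        ∃ f : Fin r → Fin t → V,
          Function.Injective (fun p : Fin r × Fin t => f p.1 p.2) ∧
          (∀ (j : Fin r) (k : Fin t), f j k ∈ A j) ∧
          (∀ (j : Fin r) (k : Fin t) (j' : Fin r) (k' : Fin t),
            j ≠ j' → G.Adj (f j k) (f j' k')) ∧
          (∀ (j' : Fin r) (k' : Fin t),
            {p : Fin r × Fin t | f p.1 p.2 ∈ B j' k'}.ncard ≤ 1) := by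
  classical
  by_cases ht0 : t = 0
  · subst ht0
    refine ⟨1, one_pos, 0, ?_⟩
    intro V _ _ G n A B _ _ _ _ _ _ _ _ _
    refine ⟨fun _ k => k.elim0, ?_, fun _ k => k.elim0, fun _ k => k.elim0, ?_⟩
    · intro p; exact p.2.elim0
    · intro _ k'; exact k'.elim0
  by_cases hr0 : r = 0
  · subst hr0
    refine ⟨1, one_pos, 0, ?_⟩
    intro V _ _ G n A B _ _ _ _ _ _ _ _ _
    refine ⟨fun j => j.elim0, ?_, fun j => j.elim0, fun j => j.elim0, ?_⟩
    · intro p; exact p.1.elim0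
    · intro j'; exact j'.elim0
  have hr1 : 1 ≤ r := Nat.one_le_iff_ne_zero.2 hr0
  have ht1 : 1 ≤ t := Nat.one_le_iff_ne_zero.2 ht0
  obtain ⟨K, hK⟩ : ∃ K : ℕ, K = 64 * (r + 1) ^ 3 * (t + 1) ^ 3 := ⟨_, rfl⟩
  have hKpos : 0 < K := by rw [hK]; positivity
  have hKR : (0 : ℝ) < (K : ℝ) := by exact_mod_cast hKpos
  refine ⟨1 / (K : ℝ), by positivity, K, ?_⟩
  intro V _ _ G n A B hn hAdisj hAcover hAcard hMulti hBdisj hBcover hBbal hEdge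
  haveI : DecidableRel G.Adj := Classical.decRel _
  have hnK : K ≤ n := hn
  have hnpos : 0 < n := lt_of_lt_of_le hKpos hnK
  -- the part of each vertex
  have hex : ∀ v : V, ∃ j, v ∈ A j := by
    intro v
    have hv : v ∈ Finset.univ.biUnion A := by rw [hAcover]; exact Finset.mem_univ v
    rcases Finset.mem_biUnion.mp hv with ⟨j, _, hj⟩
    exact ⟨j, hj⟩
  have huniq : ∀ (v : V) (i j : Fin r), v ∈ A i → v ∈ A j → i = j := by
    intro v i j hi hj
    by_contra hne
    exact Finset.disjoint_left.mp (hAdisj i j hne) hi hj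
  choose part hpart using hex
  have hBsubA : ∀ (j : Fin r) (k : Fin t), B j k ⊆ A j := by
    intro j k
    conv_rhs => rw [← hBcover j]
    exact Finset.subset_biUnion_of_mem _ (Finset.mem_univ k)
  have hVcard : (Finset.univ : Finset V).card = r * n := by
    rw [← hAcover, Finset.card_biUnion (fun i _ j _ hij => hAdisj i j hij)]
    simp [hAcard, Finset.sum_const, Finset.card_univ, mul_comm]
  -- non-neighbourhoods
  obtain ⟨Nd, hNd⟩ : ∃ Nd : V → Finset V,
      Nd = fun v => (Finset.univ \ A (part v)) \ G.neighborFinset v := ⟨_, rfl⟩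
  have hNdv : ∀ v : V, (Nd v).card + G.degree v + n = r * n := by
    intro v
    have hsub : G.neighborFinset v ⊆ Finset.univ \ A (part v) := by
      intro u hu
      rw [SimpleGraph.mem_neighborFinset] at hu
      refine Finset.mem_sdiff.2 ⟨Finset.mem_univ u, fun hu' => ?_⟩
      exact hMulti v u hu (part v) ⟨hpart v, hu'⟩
    have h1 := Finset.card_sdiff_add_card_eq_card hsub
    have h2 := Finset.card_sdiff_add_card_eq_card (Finset.subset_univ (A (part v)))
    rw [SimpleGraph.card_neighborFinset_eq_degree] at h1
    rw [hAcard, hVcard] at h2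
    rw [hNd]
    linarith
  obtain ⟨S, hS⟩ : ∃ S : ℕ, S = ∑ v : V, (Nd v).card := ⟨_, rfl⟩
  have hsum : S + 2 * G.edgeFinset.card + r * n * n = r * n * (r * n) := by
    have h1 : ∑ v : V, ((Nd v).card + G.degree v + n) = ∑ v : V, r * n :=
      Finset.sum_congr rfl (fun v _ => hNdv v)
    rw [Finset.sum_add_distrib, Finset.sum_add_distrib, Finset.sum_const, Finset.sum_const,
      hVcard, SimpleGraph.sum_degrees_eq_twice_card_edges, smul_eq_mul, smul_eq_mul] at h1
    rw [hS]
    exact h1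
  -- choose-two identity
  have h2c : 2 * r.choose 2 = r * (r - 1) := by
    rw [Nat.choose_two_right, Nat.mul_div_cancel']
    rcases Nat.exists_eq_add_of_le hr1 with ⟨m, rfl⟩
    have h : (1 + m) - 1 = m := by omega
    rw [h, mul_comm, show 1 + m = m + 1 from by omega]
    exact (Nat.even_mul_succ_self m).two_dvd
  have hEcard : (G.edgeSet.ncard : ℝ) = (G.edgeFinset.card : ℝ) := by
    have h : G.edgeSet.ncard = G.edgeFinset.card := by
      rw [Set.ncard_eq_toFinset_card']
      try rfl
    exact_mod_cast h
  -- the key counting bound : K * S ≤ r^2 * n^2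
  have hKS : K * S ≤ r ^ 2 * n ^ 2 := by
    have hc2 : (2 : ℝ) * (r.choose 2 : ℝ) = (r : ℝ) * ((r : ℝ) - 1) := by
      have hcast : ((r - 1 : ℕ) : ℝ) = (r : ℝ) - 1 := by
        rw [Nat.cast_sub hr1, Nat.cast_one]
      calc (2 : ℝ) * (r.choose 2 : ℝ) = ((2 * r.choose 2 : ℕ) : ℝ) := by push_cast; ring
      _ = ((r * (r - 1) : ℕ) : ℝ) := by rw [h2c]
      _ = (r : ℝ) * ((r : ℝ) - 1) := by rw [Nat.cast_mul, hcast]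
    have hsumR : (S : ℝ) + 2 * (G.edgeFinset.card : ℝ) + r * n * n = r * n * (r * n) := by
      exact_mod_cast congrArg (Nat.cast : ℕ → ℝ) hsum
    rw [hEcard] at hEdge
    have key : (K : ℝ) * S ≤ (r : ℝ) ^ 2 * (n : ℝ) ^ 2 := by
      have h1 : (1 - 1 / (K : ℝ)) * ((r : ℝ) * ((r : ℝ) - 1)) * (n : ℝ) ^ 2 ≤
          2 * (G.edgeFinset.card : ℝ) := by
        calc (1 - 1 / (K : ℝ)) * ((r : ℝ) * ((r : ℝ) - 1)) * (n : ℝ) ^ 2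
            = 2 * ((1 - 1 / (K : ℝ)) * (r.choose 2 : ℝ) * (n : ℝ) ^ 2) := by
              rw [← hc2]; ring
          _ ≤ 2 * (G.edgeFinset.card : ℝ) := by linarith
      have hS2 : (S : ℝ) ≤ (1 / (K : ℝ)) * ((r : ℝ) * ((r : ℝ) - 1)) * (n : ℝ) ^ 2 := by
        nlinarith [sq_nonneg (n : ℝ)]
      have hrr : (r : ℝ) * ((r : ℝ) - 1) ≤ (r : ℝ) ^ 2 := by nlinarith [Nat.cast_nonneg (α := ℝ) r]
      have hn20 : (0 : ℝ) ≤ (n : ℝ) ^ 2 := sq_nonneg _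
      calc (K : ℝ) * S ≤ (K : ℝ) * ((1 / (K : ℝ)) * ((r : ℝ) * ((r : ℝ) - 1)) * (n : ℝ) ^ 2) := by
            exact mul_le_mul_of_nonneg_left hS2 (le_of_lt hKR)
        _ = (r : ℝ) * ((r : ℝ) - 1) * (n : ℝ) ^ 2 := by field_simp
        _ ≤ (r : ℝ) ^ 2 * (n : ℝ) ^ 2 := by nlinarith
    exact_mod_cast key
  -- threshold
  obtain ⟨Q, hQ⟩ : ∃ Q : ℕ, Q = 4 * r * t ^ 2 := ⟨_, rfl⟩
  have hQpos : 0 < Q := by rw [hQ]; positivity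
  obtain ⟨D, hD⟩ : ∃ D : ℕ, D = n / Q + 1 := ⟨_, rfl⟩
  have hQD1 : n ≤ Q * D := by
    have h1 := Nat.div_add_mod n Q
    have h2 := Nat.mod_lt n hQpos
    have h3 : Q * D = Q * (n / Q) + Q := by rw [hD]; ring
    linarith
  have hQD2 : Q * D ≤ n + Q := by
    have h1 : Q * (n / Q) ≤ n := Nat.mul_div_le n Q
    have h3 : Q * D = Q * (n / Q) + Q := by rw [hD]; ring
    linarith
  have hDpos : 0 < D := by rw [hD]; exact Nat.succ_pos _
  -- bad vertices
  obtain ⟨Bad, hBad⟩ : ∃ Bad : Finset V,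
      Bad = Finset.univ.filter (fun v => D ≤ (Nd v).card) := ⟨_, rfl⟩
  have hBadD : Bad.card * D ≤ S := by
    rw [hS, hBad]
    calc (Finset.univ.filter (fun v => D ≤ (Nd v).card)).card * D
        = ∑ _v ∈ Finset.univ.filter (fun v => D ≤ (Nd v).card), D := by
          rw [Finset.sum_const, smul_eq_mul]
      _ ≤ ∑ v ∈ Finset.univ.filter (fun v => D ≤ (Nd v).card), (Nd v).card :=
          Finset.sum_le_sum (fun v hv => (Finset.mem_filter.mp hv).2)
      _ ≤ ∑ v : V, (Nd v).card := Finset.sum_le_sum_of_subset (Finset.filter_subset _ _)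
  -- bad count bound : 16 * t * Bad.card ≤ n
  have hBadn : 16 * t * Bad.card ≤ n := by
    have h1 : K * (Bad.card * D) ≤ r ^ 2 * n ^ 2 := le_trans (Nat.mul_le_mul_left K hBadD) hKS
    have h2 : r ^ 2 * n ^ 2 ≤ r ^ 2 * n * (Q * D) := by
      have : n ^ 2 ≤ n * (Q * D) := by
        calc n ^ 2 = n * n := sq n
          _ ≤ n * (Q * D) := Nat.mul_le_mul_left n hQD1
      calc r ^ 2 * n ^ 2 = r ^ 2 * (n ^ 2) := rfl
        _ ≤ r ^ 2 * (n * (Q * D)) := Nat.mul_le_mul_left _ this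
        _ = r ^ 2 * n * (Q * D) := by ring
    have h3 : K * Bad.card * D ≤ r ^ 2 * n * Q * D := by
      calc K * Bad.card * D = K * (Bad.card * D) := by ring
        _ ≤ r ^ 2 * n * (Q * D) := le_trans h1 h2
        _ = r ^ 2 * n * Q * D := by ring
    have h4 : K * Bad.card ≤ r ^ 2 * n * Q := Nat.le_of_mul_le_mul_right h3 hDpos
    have h5 : 16 * t * r ^ 2 * Q ≤ K := by
      rw [hQ, hK]
      calc 16 * t * r ^ 2 * (4 * r * t ^ 2) = 64 * r ^ 3 * t ^ 3 := by ring
        _ ≤ 64 * (r + 1) ^ 3 * (t + 1) ^ 3 := by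
            have : r ^ 3 ≤ (r + 1) ^ 3 := Nat.pow_le_pow_left (Nat.le_succ r) 3
            have ht3 : t ^ 3 ≤ (t + 1) ^ 3 := Nat.pow_le_pow_left (Nat.le_succ t) 3
            exact Nat.mul_le_mul (Nat.mul_le_mul_left 64 this) ht3
    have h6 : K * (16 * t * Bad.card) ≤ K * n := by
      calc K * (16 * t * Bad.card) = 16 * t * (K * Bad.card) := by ring
        _ ≤ 16 * t * (r ^ 2 * n * Q) := Nat.mul_le_mul_left _ h4
        _ = 16 * t * r ^ 2 * Q * n := by ring
        _ ≤ K * n := Nat.mul_le_mul_right n h5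
    exact Nat.le_of_mul_le_mul_left h6 hKpos
  -- class size lower bound
  have hBclass : ∀ (j : Fin r) (k : Fin t), n ≤ t * ((B j k).card + 1) := by
    intro j k
    have hcard : ∑ k' : Fin t, (B j k').card = n := by
      rw [← hAcard j, ← hBcover j, Finset.card_biUnion (fun a _ b _ hab => hBdisj j a b hab)]
    calc n = ∑ k' : Fin t, (B j k').card := hcard.symm
      _ ≤ ∑ _k' : Fin t, ((B j k).card + 1) :=
          Finset.sum_le_sum (fun k' _ => hBbal j k' k)
      _ = t * ((B j k).card + 1) := by
          rw [Finset.sum_const, Finset.card_univ, Fintype.card_fin, smul_eq_mul]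
  -- key inequality for the greedy step
  have hkey : ∀ (j : Fin r) (k : Fin t), Bad.card + r * t * D + 1 ≤ (B j k).card := by
    intro j k
    have hb := hBclass j k
    have h16 : 16 * t * (Bad.card + r * t * D + 1) ≤ 16 * t * (B j k).card := by
      have hrtD : 16 * (r * t ^ 2 * D) ≤ 4 * (n + Q) := by
        calc 16 * (r * t ^ 2 * D) = 4 * (Q * D) := by rw [hQ]; ring
          _ ≤ 4 * (n + Q) := Nat.mul_le_mul_left 4 hQD2
      have hQn : Q ≤ n := by
        have : Q ≤ K := by
          rw [hQ, hK]
          calc 4 * r * t ^ 2 ≤ 64 * (r+1) * (t+1) ^ 2 := by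
                have h1 : r ≤ r + 1 := Nat.le_succ r
                have h2 : t ^ 2 ≤ (t + 1) ^ 2 := Nat.pow_le_pow_left (Nat.le_succ t) 2
                calc 4 * r * t ^ 2 ≤ 4 * (r + 1) * (t + 1) ^ 2 :=
                      Nat.mul_le_mul (Nat.mul_le_mul_left 4 h1) h2
                  _ ≤ 64 * (r + 1) * (t + 1) ^ 2 :=
                      Nat.mul_le_mul_right _ (Nat.mul_le_mul_right _ (by norm_num))
            _ ≤ 64 * (r+1) ^ 3 * (t+1) ^ 3 := by
                have h1 : r + 1 ≤ (r + 1) ^ 3 := Nat.le_self_pow (by norm_num) _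
                have h2 : (t + 1) ^ 2 ≤ (t + 1) ^ 3 :=
                  Nat.pow_le_pow_right (Nat.succ_pos t) (by norm_num)
                exact Nat.mul_le_mul (Nat.mul_le_mul_left 64 h1) h2
        exact this.trans hnK
      have htn : 48 * t ≤ n := by
        have h0 : t + 1 ≤ (t + 1) ^ 3 := Nat.le_self_pow (by norm_num) _
        have h1 : 1 ≤ (r + 1) ^ 3 := Nat.one_le_pow _ _ (Nat.succ_pos r)
        have h2 : 48 * t ≤ K := by
          rw [hK]
          calc 48 * t ≤ 64 * (t + 1) := by omega
            _ ≤ 64 * (t + 1) ^ 3 := Nat.mul_le_mul_left 64 h0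
            _ = 64 * 1 * (t + 1) ^ 3 := by ring
            _ ≤ 64 * (r + 1) ^ 3 * (t + 1) ^ 3 :=
                Nat.mul_le_mul_right _ (Nat.mul_le_mul_left 64 h1)
        exact h2.trans hnK
      have h9 : 16 * t * (Bad.card + r * t * D + 1) =
          16 * t * Bad.card + 16 * (r * t ^ 2 * D) + 16 * t := by ring
      have h10 : 16 * t * (B j k).card + 16 * t ≥ 16 * n := by
        calc 16 * n ≤ 16 * (t * ((B j k).card + 1)) := Nat.mul_le_mul_left 16 hb
          _ = 16 * t * (B j k).card + 16 * t := by ring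
      -- now combine: LHS ≤ n + 4(n+Q) + 16 t ≤ 5n + 4n + 16t ≤ 16 n - 16 t
      have h11 : 16 * t * Bad.card + 16 * (r * t ^ 2 * D) + 16 * t ≤ n + 4 * (n + Q) + 16 * t :=
        by linarith
      linarith
    have htpos : 0 < 16 * t := by positivity
    exact Nat.le_of_mul_le_mul_left h16 htpos
  -- V is nonempty
  have hVne : Nonempty V := by
    have : (A ⟨0, hr1⟩).Nonempty := Finset.card_pos.mp (by rw [hAcard]; exact hnpos)
    exact ⟨this.choose⟩
  -- not-bad vertices have small non-neighbourhoods
  have hNotBad : ∀ v : V, v ∉ Bad → (Nd v).card ≤ D := by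
    intro v hv
    rw [hBad] at hv
    rw [Finset.mem_filter] at hv
    push_neg at hv
    exact le_of_lt (hv (Finset.mem_univ v))
  -- greedy construction
  have greedy : ∀ P : Finset (Fin r × Fin t), ∃ f : Fin r × Fin t → V,
      ∀ p ∈ P, (f p ∈ B p.1 p.2 ∧ f p ∉ Bad) ∧
        ∀ q ∈ P, p.1 ≠ q.1 → G.Adj (f p) (f q) := by
    intro P
    induction P using Finset.induction_on with
    | empty => exact ⟨fun _ => Classical.arbitrary V, by simp⟩
    | @insert p P hp ih =>
      obtain ⟨f, hf⟩ := ih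
      obtain ⟨Excl, hExcl⟩ : ∃ E : Finset V,
        E = (P.filter (fun q => q.1 ≠ p.1)).biUnion (fun q => Nd (f q)) := ⟨_, rfl⟩
      obtain ⟨C, hC⟩ : ∃ C : Finset V, C = (B p.1 p.2 \ Bad) \ Excl := ⟨_, rfl⟩
      have hExclcard : Excl.card ≤ r * t * D := by
        rw [hExcl]
        calc ((P.filter (fun q => q.1 ≠ p.1)).biUnion (fun q => Nd (f q))).card ≤ ∑ q ∈ P.filter (fun q => q.1 ≠ p.1), (Nd (f q)).card :=
              Finset.card_biUnion_le
          _ ≤ (P.filter (fun q => q.1 ≠ p.1)).card • D := by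
              apply Finset.sum_le_card_nsmul
              intro q hq
              have hq' := Finset.mem_filter.mp hq
              exact hNotBad _ ((hf q hq'.1).1).2
          _ ≤ (r * t) * D := by
              have h1 : (P.filter (fun q => q.1 ≠ p.1)).card ≤ r * t := by
                calc (P.filter (fun q => q.1 ≠ p.1)).card ≤
                    (Finset.univ : Finset (Fin r × Fin t)).card :=
                      Finset.card_le_card (Finset.subset_univ _)
                  _ = r * t := by rw [Finset.card_univ]; simp
              simpa [smul_eq_mul] using Nat.mul_le_mul_right D h1
      have hCne : C.Nonempty := by
        rw [← Finset.card_pos]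
        have h1 : (B p.1 p.2).card ≤ (B p.1 p.2 \ Bad).card + Bad.card :=
          Finset.card_le_card_sdiff_add_card
        have h2 : (B p.1 p.2 \ Bad).card ≤ C.card + Excl.card := by
          rw [hC]; exact Finset.card_le_card_sdiff_add_card
        have h3 := hkey p.1 p.2
        linarith
      obtain ⟨v, hv⟩ := hCne
      rw [hC, Finset.mem_sdiff, Finset.mem_sdiff] at hv
      obtain ⟨⟨hvB, hvBad⟩, hvE⟩ := hv
      refine ⟨Function.update f p v, ?_⟩
      have hadj : ∀ q ∈ P, q.1 ≠ p.1 → G.Adj (f q) v := by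
        intro q hq hne
        have hqf : q ∈ P.filter (fun q => q.1 ≠ p.1) := Finset.mem_filter.2 ⟨hq, hne⟩
        have hvN : v ∉ Nd (f q) := fun h => hvE (hExcl ▸ Finset.mem_biUnion.2 ⟨q, hqf, h⟩)
        have hfq : f q ∈ A q.1 := hBsubA q.1 q.2 ((hf q hq).1).1
        have hpartq : part (f q) = q.1 := huniq (f q) _ _ (hpart (f q)) hfq
        have hvA : v ∈ A p.1 := hBsubA p.1 p.2 hvB
        have hvnotA : v ∉ A q.1 := fun h =>
          Finset.disjoint_left.mp (hAdisj p.1 q.1 (Ne.symm hne)) hvA h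
        have : v ∈ Finset.univ \ A (part (f q)) := by
          rw [hpartq]; exact Finset.mem_sdiff.2 ⟨Finset.mem_univ v, hvnotA⟩
        rw [hNd] at hvN
        have : v ∈ G.neighborFinset (f q) := by
          by_contra hnb
          exact hvN (Finset.mem_sdiff.2 ⟨this, hnb⟩)
        exact (SimpleGraph.mem_neighborFinset _ _ _).mp this
      intro q hq
      rcases Finset.mem_insert.mp hq with rfl | hqP
      · constructor
        · rw [Function.update_self]; exact ⟨hvB, hvBad⟩
        · intro q' hq' hne'
          rcases Finset.mem_insert.mp hq' with rfl | hq'P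
          · exact absurd rfl hne'
          · have hq'p : q' ≠ q := fun h => hp (h ▸ hq'P)
            rw [Function.update_self, Function.update_of_ne hq'p]
            exact (hadj q' hq'P (Ne.symm hne')).symm
      · have hqp : q ≠ p := fun h => hp (h ▸ hqP)
        rw [Function.update_of_ne hqp]
        constructor
        · exact (hf q hqP).1
        · intro q' hq' hne'
          rcases Finset.mem_insert.mp hq' with rfl | hq'P
          · rw [Function.update_self]
            exact hadj q hqP hne'
          · have hq'p : q' ≠ p := fun h => hp (h ▸ hq'P)
            rw [Function.update_of_ne hq'p]
            exact (hf q hqP).2 q' hq'P hne'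
  obtain ⟨f, hf⟩ := greedy Finset.univ
  have hfB : ∀ p : Fin r × Fin t, f p ∈ B p.1 p.2 :=
    fun p => ((hf p (Finset.mem_univ p)).1).1
  have hfadj : ∀ p q : Fin r × Fin t, p.1 ≠ q.1 → G.Adj (f p) (f q) :=
    fun p q h => (hf p (Finset.mem_univ p)).2 q (Finset.mem_univ q) h
  refine ⟨fun j k => f (j, k), ?_, ?_, ?_, ?_⟩
  · intro p q hpq
    simp only at hpq
    have hpq' : f p = f q := by
      have : (p.1, p.2) = p := rfl
      have : (q.1, q.2) = q := rfl
      simpa using hpq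
    by_contra hne
    rcases eq_or_ne p.1 q.1 with h1 | h1
    · have h2 : p.2 ≠ q.2 := fun h2 => hne (Prod.ext h1 h2)
      have hqB : f q ∈ B p.1 q.2 := by rw [h1]; exact hfB q
      have hpB : f p ∈ B p.1 p.2 := hfB p
      rw [hpq'] at hpB
      exact Finset.disjoint_left.mp (hBdisj p.1 p.2 q.2 h2) hpB hqB
    · have := hfadj p q h1
      rw [hpq'] at this
      exact G.loopless.irrefl _ this
  · intro j k; exact hBsubA j k (hfB (j, k))
  · intro j k j' k' hjj'
    exact hfadj (j, k) (j', k') hjj'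
  · intro j' k'
    have hsub : {p : Fin r × Fin t | f (p.1, p.2) ∈ B j' k'} ⊆ {(j', k')} := by
      intro p hp
      simp only [Set.mem_setOf_eq] at hp
      have hp' : f p ∈ B j' k' := by
        have : (p.1, p.2) = p := rfl
        rwa [this] at hp
      have hpA : f p ∈ A p.1 := hBsubA p.1 p.2 (hfB p)
      have hpA' : f p ∈ A j' := hBsubA j' k' hp'
      have h1 : p.1 = j' := huniq (f p) _ _ hpA hpA'
      have h2 : p.2 = k' := by
        by_contra h2
        exact Finset.disjoint_left.mp (hBdisj j' p.2 k' h2) (h1 ▸ hfB p) hp'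
      show p ∈ ({(j', k')} : Set (Fin r × Fin t))
      rw [Set.mem_singleton_iff]
      exact Prod.ext h1 h2
    calc {p : Fin r × Fin t | f (p.1, p.2) ∈ B j' k'}.ncard
        ≤ ({(j', k')} : Set (Fin r × Fin t)).ncard :=
          Set.ncard_le_ncard hsub (Set.finite_singleton _)
      _ = 1 := Set.ncard_singleton _

end ABBM
end

section
/- For every integer k ≥ 3 and every sufficiently large n, the number of U(k)-free bipartite graphs on two fixed disjoint vertex classes A and B with |A| = |B| = n (all edges lying between A and B) is at most exp(n^{2−1/(k−1)}·(log n)^{k+1}). -/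
open scoped symmDiff

namespace ABBM

variable {V : Type*}

/-- The bipartite graph on `Fin m ⊕ Fin n` with edge set `E ⊆ Fin m × Fin n`. -/
def bipGraph (m n : ℕ) (E : Finset (Fin m × Fin n)) : SimpleGraph (Fin m ⊕ Fin n) where
  Adj x y := (∃ a b, (a, b) ∈ E ∧ x = Sum.inl a ∧ y = Sum.inr b) ∨
             (∃ a b, (a, b) ∈ E ∧ x = Sum.inr b ∧ y = Sum.inl a)
  symm := by
    constructor
    rintro x y (⟨a, b, h, rfl, rfl⟩ | ⟨a, b, h, rfl, rfl⟩)
    · exact Or.inr ⟨a, b, h, rfl, rfl⟩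
    · exact Or.inl ⟨a, b, h, rfl, rfl⟩
  loopless := by
    constructor
    rintro x (⟨a, b, h, rfl, h2⟩ | ⟨a, b, h, rfl, h2⟩) <;> simp at h2


section Aux
set_option linter.deprecated false

open Finset


variable {α : Type*} [DecidableEq α]

lemma sum_choose_le (t d : ℕ) : ∑ i ∈ Finset.range (d+1), t.choose i ≤ (t+1)^d := by
  induction d with
  | zero => simp
  | succ d ih =>
    rw [Finset.sum_range_succ, pow_succ]
    have h1 : t.choose (d+1) ≤ t^(d+1) := Nat.choose_le_pow t (d+1)
    have h2 : t^(d+1) ≤ t * (t+1)^d := by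
      rw [pow_succ']
      exact Nat.mul_le_mul_left t (Nat.pow_le_pow_left (Nat.le_succ t) d)
    calc ∑ i ∈ Finset.range (d+1), t.choose i + t.choose (d+1)
        ≤ (t+1)^d + t * (t+1)^d := Nat.add_le_add ih (h1.trans h2)
      _ = (t+1)^d * (t+1) := by ring

/-- The number of subsets of `u` of size at most `d` is at most `(|u|+1)^d`. -/
lemma card_filter_powerset_le (u : Finset α) (d : ℕ) :
    (u.powerset.filter fun t => t.card ≤ d).card ≤ (u.card + 1)^d := by
  classical
  have : (u.powerset.filter fun t => t.card ≤ d)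
      = (Finset.range (d+1)).biUnion (fun i => u.powersetCard i) := by
    ext t
    simp [Nat.lt_succ_iff, Finset.mem_powersetCard, Finset.mem_powerset]
    tauto
  rw [this]
  calc ((Finset.range (d+1)).biUnion (fun i => u.powersetCard i)).card
      ≤ ∑ i ∈ Finset.range (d+1), (u.powersetCard i).card := Finset.card_biUnion_le
    _ = ∑ i ∈ Finset.range (d+1), u.card.choose i := by
        simp [Finset.card_powersetCard]
    _ ≤ (u.card + 1)^d := sum_choose_le _ _

open scoped Classical in
/-- Families of subsets of `g` with no shattered set of size `≥ k`. -/
noncomputable def adm (k : ℕ) (g : Finset α) : Finset (Finset (Finset α)) :=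
  g.powerset.powerset.filter fun 𝒜 => ∀ s : Finset α, 𝒜.Shatters s → s.card < k

lemma mem_adm {k : ℕ} {g : Finset α} {𝒜 : Finset (Finset α)} :
    𝒜 ∈ adm k g ↔ 𝒜 ⊆ g.powerset ∧ ∀ s : Finset α, 𝒜.Shatters s → s.card < k := by
  classical
  simp [adm, Finset.mem_filter, Finset.mem_powerset]

/-- Sauer–Shelah (via Pajor): an admissible family has at most `(|g|+1)^(k-1)` members. -/
lemma card_le_of_mem_adm {k : ℕ} (hk : 1 ≤ k) {g : Finset α} {𝒜 : Finset (Finset α)}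
    (h : 𝒜 ∈ adm k g) : 𝒜.card ≤ (g.card + 1) ^ (k - 1) := by
  classical
  rw [mem_adm] at h
  refine (Finset.card_le_card_shatterer 𝒜).trans ?_
  refine le_trans ?_ (card_filter_powerset_le g (k-1))
  apply Finset.card_le_card
  intro s hs
  rw [Finset.mem_shatterer] at hs
  rw [Finset.mem_filter, Finset.mem_powerset]
  obtain ⟨u, hu, hsu⟩ := hs.exists_superset
  refine ⟨hsu.trans (Finset.mem_powerset.1 (h.1 hu)), ?_⟩
  have := h.2 s hs
  omega

lemma exp_quarter_le : Real.exp (1/4 : ℝ) ≤ 3/2 := by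
  by_contra h
  push_neg at h
  have h4 : (Real.exp (1/4 : ℝ))^4 = Real.exp 1 := by
    rw [← Real.exp_nat_mul]; norm_num
  have := pow_lt_pow_left₀ h (by norm_num : (0:ℝ) ≤ 3/2) (by norm_num : 4 ≠ 0)
  rw [h4] at this
  have h9 := Real.exp_one_lt_d9
  norm_num at this
  linarith

lemma one_add_inv_pow {k : ℕ} (hk : 3 ≤ k) :
    (1 + 1/(4*(k:ℝ)))^(k-1) ≤ 3/2 := by
  have hk0 : (0:ℝ) < 4*(k:ℝ) := by positivity
  have h1 : (1 + 1/(4*(k:ℝ))) ≤ Real.exp (1/(4*(k:ℝ))) := by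
    have := Real.add_one_le_exp (1/(4*(k:ℝ)))
    linarith
  have h2 : (1 + 1/(4*(k:ℝ)))^(k-1) ≤ (Real.exp (1/(4*(k:ℝ))))^(k-1) := by
    apply pow_le_pow_left₀ (by positivity) h1
  rw [← Real.exp_nat_mul] at h2
  refine h2.trans (le_trans (Real.exp_le_exp.2 ?_) exp_quarter_le)
  have hcast : ((k - 1 : ℕ) : ℝ) ≤ (k:ℝ) := by
    have := Nat.sub_le k 1; exact_mod_cast Nat.cast_le.2 this
  rw [mul_one_div, div_le_div_iff₀ hk0 (by norm_num : (0:ℝ) < 4)]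
  have hkpos : (0:ℝ) < (k:ℝ) := by exact_mod_cast (by omega : 0 < k)
  nlinarith [hcast, hkpos]

lemma pow_eq_exp {x : ℝ} (hx : 0 < x) (j : ℕ) : x ^ j = Real.exp (j * Real.log x) := by
  rw [← Real.rpow_natCast x j, Real.rpow_def_of_pos hx, mul_comm]

variable {α : Type*} [DecidableEq α]

/-- Projections of admissible families are admissible. -/
lemma adm_image_inter {k : ℕ} {g g' : Finset α} {𝒜 : Finset (Finset α)}
    (h : 𝒜 ∈ adm k g) : 𝒜.image (· ∩ g') ∈ adm k g' := by
  rw [mem_adm] at h ⊢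
  constructor
  · intro u hu
    rw [Finset.mem_image] at hu
    obtain ⟨S, _, rfl⟩ := hu
    exact Finset.mem_powerset.2 Finset.inter_subset_right
  · intro s hs
    have hsg' : s ⊆ g' := by
      obtain ⟨u, hu, hsu⟩ := hs.exists_superset
      rw [Finset.mem_image] at hu
      obtain ⟨S, _, rfl⟩ := hu
      exact hsu.trans Finset.inter_subset_right
    refine h.2 s (fun t ht => ?_)
    obtain ⟨u, hu, hsu⟩ := hs ht
    rw [Finset.mem_image] at hu
    obtain ⟨S, hS, rfl⟩ := hu
    refine ⟨S, hS, ?_⟩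
    rw [← hsu, inter_comm S g', ← inter_assoc, Finset.inter_eq_left.2 hsg']

/-- Recovery: an admissible family is determined by its pairs of projections. -/
lemma adm_recover {k : ℕ} {g g₁ : Finset α} (hg₁ : g₁ ⊆ g) {𝒜 : Finset (Finset α)}
    (h : 𝒜 ∈ adm k g) :
    (𝒜.image (fun S => (S ∩ g₁, S ∩ (g \ g₁)))).image (fun p => p.1 ∪ p.2) = 𝒜 := by
  rw [Finset.image_image]
  have : ∀ S ∈ 𝒜, ((fun p : Finset α × Finset α => p.1 ∪ p.2) ∘
      (fun S => (S ∩ g₁, S ∩ (g \ g₁)))) S = id S := by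
    intro S hS
    have hSg : S ⊆ g := Finset.mem_powerset.1 ((mem_adm.1 h).1 hS)
    simp only [Function.comp_apply, id_eq]
    rw [← Finset.inter_union_distrib_left, Finset.union_sdiff_of_subset hg₁,
      Finset.inter_eq_left.2 hSg]
  have him : Finset.image ((fun p : Finset α × Finset α => p.1 ∪ p.2) ∘
      (fun S => (S ∩ g₁, S ∩ (g \ g₁)))) 𝒜 = Finset.image id 𝒜 :=
    Finset.image_congr (fun x hx => this x hx)
  rw [him, Finset.image_id]

lemma split_pow_bound {k m : ℕ} (hk : 3 ≤ k) (hm : 8*k < m) :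
    (((m/2 : ℕ) : ℝ) + 1)^(k-1) + (((m - m/2 : ℕ) : ℝ) + 1)^(k-1) ≤
      (3/4) * ((m:ℝ)+1)^(k-1) := by
  have hk4 : (0:ℝ) < 4*(k:ℝ) := by positivity
  have h8k : (8*(k:ℝ) + 1) ≤ (m:ℝ) := by exact_mod_cast Nat.succ_le_of_lt hm
  have ha : ((m/2 : ℕ) : ℝ) + 1 ≤ ((m:ℝ)+3)/2 := by
    have h : ((m/2 : ℕ)) * 2 ≤ m := Nat.div_mul_le_self m 2
    have h' : ((m/2 : ℕ) : ℝ) * 2 ≤ (m:ℝ) := by exact_mod_cast h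
    linarith
  have hb : ((m - m/2 : ℕ) : ℝ) + 1 ≤ ((m:ℝ)+3)/2 := by
    have h : (m - m/2) * 2 ≤ m + 1 := by omega
    have h' : ((m - m/2 : ℕ) : ℝ) * 2 ≤ (m:ℝ) + 1 := by exact_mod_cast h
    linarith
  have hA : (((m/2 : ℕ) : ℝ) + 1)^(k-1) ≤ (((m:ℝ)+3)/2)^(k-1) :=
    pow_le_pow_left₀ (by positivity) ha _
  have hB : (((m - m/2 : ℕ) : ℝ) + 1)^(k-1) ≤ (((m:ℝ)+3)/2)^(k-1) :=
    pow_le_pow_left₀ (by positivity) hb _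
  have hstep : ((m:ℝ)+3) ≤ (1 + 1/(4*(k:ℝ)))*((m:ℝ)+1) := by
    have hdiff : (1 + 1/(4*(k:ℝ)))*((m:ℝ)+1) - ((m:ℝ)+3) = ((m:ℝ)+1)/(4*(k:ℝ)) - 2 := by
      field_simp; ring
    have hdiv : (2:ℝ) ≤ ((m:ℝ)+1)/(4*(k:ℝ)) := by
      rw [le_div_iff₀ hk4]; linarith
    linarith
  have hpow3 : (((m:ℝ)+3))^(k-1) ≤ (3/2) * ((m:ℝ)+1)^(k-1) := by
    calc (((m:ℝ)+3))^(k-1) ≤ ((1 + 1/(4*(k:ℝ)))*((m:ℝ)+1))^(k-1) :=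
          pow_le_pow_left₀ (by positivity) hstep _
      _ = (1 + 1/(4*(k:ℝ)))^(k-1) * ((m:ℝ)+1)^(k-1) := mul_pow _ _ _
      _ ≤ (3/2) * ((m:ℝ)+1)^(k-1) := by
          apply mul_le_mul_of_nonneg_right (one_add_inv_pow hk) (by positivity)
  have h2pow : (4:ℝ) ≤ (2:ℝ)^(k-1) := by
    calc (4:ℝ) = 2^2 := by norm_num
      _ ≤ (2:ℝ)^(k-1) := pow_le_pow_right₀ (by norm_num) (by omega)
  have hhalf : (((m:ℝ)+3)/2)^(k-1) ≤ (3/8) * ((m:ℝ)+1)^(k-1) := by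
    rw [div_pow]
    rw [div_le_iff₀ (by positivity : (0:ℝ) < (2:ℝ)^(k-1))]
    have hnn : (0:ℝ) ≤ (3/8) * ((m:ℝ)+1)^(k-1) := by positivity
    calc (((m:ℝ)+3))^(k-1) ≤ (3/2) * ((m:ℝ)+1)^(k-1) := hpow3
      _ = (3/8) * ((m:ℝ)+1)^(k-1) * 4 := by ring
      _ ≤ (3/8) * ((m:ℝ)+1)^(k-1) * (2:ℝ)^(k-1) := by
          exact mul_le_mul_of_nonneg_left h2pow hnn
  calc (((m/2 : ℕ) : ℝ) + 1)^(k-1) + (((m - m/2 : ℕ) : ℝ) + 1)^(k-1)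
      ≤ (((m:ℝ)+3)/2)^(k-1) + (((m:ℝ)+3)/2)^(k-1) := add_le_add hA hB
    _ ≤ (3/8) * ((m:ℝ)+1)^(k-1) + (3/8) * ((m:ℝ)+1)^(k-1) := add_le_add hhalf hhalf
    _ = (3/4) * ((m:ℝ)+1)^(k-1) := by ring

lemma adm_count (k : ℕ) (hk : 3 ≤ k) :
    ∀ (m : ℕ) (g : Finset α), g.card = m →
      ((adm k g).card : ℝ) ≤
        Real.exp (16*(k:ℝ) * ((m:ℝ)+1)^(k-1) * Real.log ((m:ℝ)+2)) := by
  intro m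
  induction m using Nat.strong_induction_on with
  | _ m ih =>
  intro g hg
  have hm2R : (0:ℝ) < (m:ℝ) + 2 := by positivity
  have hL2 : Real.log 2 ≤ Real.log ((m:ℝ)+2) := by
    apply Real.log_le_log (by norm_num)
    have : (0:ℝ) ≤ (m:ℝ) := Nat.cast_nonneg m
    linarith
  have hLpos : (0:ℝ) < Real.log ((m:ℝ)+2) := by
    apply Real.log_pos
    have : (0:ℝ) ≤ (m:ℝ) := Nat.cast_nonneg m
    linarith
  have hsR : (((m+1)^(k-1) : ℕ) : ℝ) = ((m:ℝ)+1)^(k-1) := by push_cast; ring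
  by_cases hm : m ≤ 8*k
  · -- base case
    set s := (m+1)^(k-1) with hs
    have hsub : adm k g ⊆ g.powerset.powerset.filter (fun 𝒜 => 𝒜.card ≤ s) := by
      intro 𝒜 h𝒜
      rw [Finset.mem_filter, Finset.mem_powerset]
      refine ⟨(mem_adm.1 h𝒜).1, ?_⟩
      have := card_le_of_mem_adm (by omega : 1 ≤ k) h𝒜
      rwa [hg] at this
    have h1 : (adm k g).card ≤ (2^m + 1)^s := by
      refine (Finset.card_le_card hsub).trans ?_
      have h2 := card_filter_powerset_le (g.powerset) s
      rwa [Finset.card_powerset, hg] at h2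
    calc ((adm k g).card : ℝ) ≤ (((2^m + 1)^s : ℕ) : ℝ) := by exact_mod_cast h1
      _ = ((2:ℝ)^m + 1)^s := by push_cast; ring
      _ ≤ ((2:ℝ)^(m+1))^s := by
          apply pow_le_pow_left₀ (by positivity)
          have h3 : (1:ℝ) ≤ (2:ℝ)^m := one_le_pow₀ (by norm_num : (1:ℝ) ≤ 2)
          rw [pow_succ]
          linarith
      _ = Real.exp ((s : ℝ) * ((m+1) * Real.log 2)) := by
          rw [pow_eq_exp (by positivity : (0:ℝ) < (2:ℝ)^(m+1))]
          rw [pow_eq_exp (by norm_num : (0:ℝ) < (2:ℝ))]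
          rw [Real.log_exp]
          push_cast
          ring
      _ ≤ Real.exp (16*(k:ℝ) * ((m:ℝ)+1)^(k-1) * Real.log ((m:ℝ)+2)) := by
          apply Real.exp_le_exp.2
          rw [hsR]
          have hS : (0:ℝ) ≤ ((m:ℝ)+1)^(k-1) := by positivity
          have hm16 : ((m:ℝ)+1) ≤ 16*(k:ℝ) := by
            have : (m:ℝ) ≤ 8*(k:ℝ) := by exact_mod_cast hm
            have : (1:ℝ) ≤ (k:ℝ) := by exact_mod_cast (by omega : 1 ≤ k)
            linarith
          have hlog2 : (0:ℝ) ≤ Real.log 2 := Real.log_nonneg (by norm_num)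
          calc ((m:ℝ)+1)^(k-1) * (((m:ℝ)+1) * Real.log 2)
              ≤ ((m:ℝ)+1)^(k-1) * ((16*(k:ℝ)) * Real.log ((m:ℝ)+2)) := by
                apply mul_le_mul_of_nonneg_left ?_ hS
                exact mul_le_mul hm16 hL2 hlog2 (by positivity)
            _ = 16*(k:ℝ) * ((m:ℝ)+1)^(k-1) * Real.log ((m:ℝ)+2) := by ring
  · -- recursive case
    have hm' : 8*k < m := not_le.1 hm
    have hm2 : 2 ≤ m := by omega
    set s := (m+1)^(k-1) with hs
    set a := m/2 with ha
    obtain ⟨g₁, hg₁sub, hg₁card⟩ := Finset.exists_subset_card_eq (s := g) (n := a) (by rw [hg]; omega)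
    set g₂ := g \ g₁ with hg₂def
    set b := m - a with hb
    have hg₂card : g₂.card = b := by
      rw [hg₂def, Finset.card_sdiff_of_subset hg₁sub, hg, hg₁card]
    -- the injection into the sigma type
    have key : (adm k g).card ≤
        (((adm k g₁) ×ˢ (adm k g₂)).sigma
          (fun q => (q.1 ×ˢ q.2).powerset.filter fun P => P.card ≤ s)).card := by
      apply Finset.card_le_card_of_injOn
        (fun 𝒜 => ⟨(𝒜.image (fun S => S ∩ g₁), 𝒜.image (fun S => S ∩ g₂)),
          𝒜.image (fun S => (S ∩ g₁, S ∩ g₂))⟩)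
      · intro 𝒜 h𝒜
        rw [Finset.mem_coe] at h𝒜 ⊢
        rw [Finset.mem_sigma]
        constructor
        · rw [Finset.mem_product]
          exact ⟨adm_image_inter h𝒜, adm_image_inter h𝒜⟩
        · rw [Finset.mem_filter, Finset.mem_powerset]
          constructor
          · intro p hp
            rw [Finset.mem_image] at hp
            obtain ⟨S, hS, rfl⟩ := hp
            rw [Finset.mem_product]
            exact ⟨Finset.mem_image_of_mem _ hS, Finset.mem_image_of_mem _ hS⟩
          · refine Finset.card_image_le.trans ?_
            have := card_le_of_mem_adm (by omega : 1 ≤ k) h𝒜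
            rwa [hg] at this
      · intro 𝒜 h𝒜 ℬ hℬ heq
        rw [Finset.mem_coe] at h𝒜 hℬ
        have hP : 𝒜.image (fun S => (S ∩ g₁, S ∩ g₂)) = ℬ.image (fun S => (S ∩ g₁, S ∩ g₂)) :=
          congrArg Sigma.snd heq
        have h1 := adm_recover hg₁sub h𝒜
        have h2 := adm_recover hg₁sub hℬ
        rw [← hg₂def] at h1 h2
        rw [← h1, ← h2, hP]
    -- cardinality of the sigma set
    set B := ((a+1)^(k-1) * ((b+1)^(k-1)) + 1)^s with hB
    have hcard : (((adm k g₁) ×ˢ (adm k g₂)).sigma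
          (fun q => (q.1 ×ˢ q.2).powerset.filter fun P => P.card ≤ s)).card ≤
        (adm k g₁).card * (adm k g₂).card * B := by
      rw [Finset.card_sigma]
      have hbound : ∀ q ∈ (adm k g₁) ×ˢ (adm k g₂),
          ((q.1 ×ˢ q.2).powerset.filter fun P => P.card ≤ s).card ≤ B := by
        intro q hq
        rw [Finset.mem_product] at hq
        refine (card_filter_powerset_le _ s).trans ?_
        apply Nat.pow_le_pow_left
        have h1 := card_le_of_mem_adm (by omega : 1 ≤ k) hq.1
        have h2 := card_le_of_mem_adm (by omega : 1 ≤ k) hq.2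
        rw [hg₁card] at h1
        rw [hg₂card] at h2
        rw [Finset.card_product]
        exact Nat.succ_le_succ (Nat.mul_le_mul h1 h2)
      calc ∑ q ∈ (adm k g₁) ×ˢ (adm k g₂),
            ((q.1 ×ˢ q.2).powerset.filter fun P => P.card ≤ s).card
          ≤ ((adm k g₁) ×ˢ (adm k g₂)).card * B := by
            have := Finset.sum_le_card_nsmul _ _ B hbound
            rwa [smul_eq_mul] at this
        _ = (adm k g₁).card * (adm k g₂).card * B := by rw [Finset.card_product]
    -- the ℕ bound on B
    have hBle : B ≤ ((m+2)^(2*(k-1)))^s := by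
      apply Nat.pow_le_pow_left
      have h1 : (a+1)^(k-1) * (b+1)^(k-1) ≤ (m+1)^(2*(k-1)) := by
        rw [two_mul, pow_add]
        exact Nat.mul_le_mul (Nat.pow_le_pow_left (by omega) _)
          (Nat.pow_le_pow_left (by omega) _)
      have h2 : (m+1)^(2*(k-1)) < (m+2)^(2*(k-1)) :=
        Nat.pow_lt_pow_left (by omega) (by omega)
      omega
    -- apply IH
    have hacard : a < m := by omega
    have hbcard : b < m := by omega
    have ih1 := ih a hacard g₁ hg₁card
    have ih2 := ih b hbcard g₂ hg₂card
    -- put everything together over ℝ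
    have hchain : ((adm k g).card : ℝ) ≤
        ((adm k g₁).card : ℝ) * ((adm k g₂).card : ℝ) * (((m:ℝ)+2)^(2*(k-1)))^s := by
      have hN : (adm k g).card ≤ (adm k g₁).card * (adm k g₂).card * ((m+2)^(2*(k-1)))^s :=
        key.trans (hcard.trans (by
          exact Nat.mul_le_mul_left _ hBle))
      calc ((adm k g).card : ℝ)
          ≤ (((adm k g₁).card * (adm k g₂).card * ((m+2)^(2*(k-1)))^s : ℕ) : ℝ) := by
            exact_mod_cast hN
        _ = ((adm k g₁).card : ℝ) * ((adm k g₂).card : ℝ) * (((m:ℝ)+2)^(2*(k-1)))^s := by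
            push_cast; ring
    have hexpB : ((((m:ℝ)+2))^(2*(k-1)))^s =
        Real.exp ((s:ℝ) * ((2*(k-1) : ℕ) : ℝ) * Real.log ((m:ℝ)+2)) := by
      rw [pow_eq_exp hm2R, ← Real.exp_nat_mul]
      ring_nf
    refine (hchain.trans ?_)
    rw [hexpB]
    have hprod : ((adm k g₁).card : ℝ) * ((adm k g₂).card : ℝ) *
          Real.exp ((s:ℝ) * ((2*(k-1) : ℕ) : ℝ) * Real.log ((m:ℝ)+2)) ≤
        Real.exp (16*(k:ℝ) * ((a:ℝ)+1)^(k-1) * Real.log ((a:ℝ)+2)) *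
          Real.exp (16*(k:ℝ) * ((b:ℝ)+1)^(k-1) * Real.log ((b:ℝ)+2)) *
          Real.exp ((s:ℝ) * ((2*(k-1) : ℕ) : ℝ) * Real.log ((m:ℝ)+2)) := by
      have c1 : (0:ℝ) ≤ ((adm k g₂).card : ℝ) := Nat.cast_nonneg _
      have c2 : (0:ℝ) ≤ Real.exp (16*(k:ℝ) * ((a:ℝ)+1)^(k-1) * Real.log ((a:ℝ)+2)) :=
        (Real.exp_pos _).le
      apply mul_le_mul_of_nonneg_right ?_ (Real.exp_pos _).le
      exact mul_le_mul ih1 ih2 c1 c2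
    refine hprod.trans ?_
    rw [← Real.exp_add, ← Real.exp_add]
    apply Real.exp_le_exp.2
    -- final arithmetic
    have hLa : Real.log ((a:ℝ)+2) ≤ Real.log ((m:ℝ)+2) := by
      apply Real.log_le_log (by positivity)
      have : (a:ℝ) ≤ (m:ℝ) := by exact_mod_cast Nat.le_of_lt hacard
      linarith
    have hLb : Real.log ((b:ℝ)+2) ≤ Real.log ((m:ℝ)+2) := by
      apply Real.log_le_log (by positivity)
      have : (b:ℝ) ≤ (m:ℝ) := by exact_mod_cast Nat.le_of_lt hbcard
      linarith
    have hsplit := split_pow_bound hk hm'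
    rw [← ha, ← hb] at hsplit
    have hA1 : (0:ℝ) ≤ ((a:ℝ)+1)^(k-1) := by positivity
    have hA2 : (0:ℝ) ≤ ((b:ℝ)+1)^(k-1) := by positivity
    have hLaPos : (0:ℝ) ≤ Real.log ((a:ℝ)+2) := by
      apply Real.log_nonneg
      have : (0:ℝ) ≤ (a:ℝ) := Nat.cast_nonneg a
      linarith
    have hLbPos : (0:ℝ) ≤ Real.log ((b:ℝ)+2) := by
      apply Real.log_nonneg
      have : (0:ℝ) ≤ (b:ℝ) := Nat.cast_nonneg b
      linarith
    have hkpos : (0:ℝ) < (k:ℝ) := by exact_mod_cast (by omega : 0 < k)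
    have t1 : 16*(k:ℝ) * ((a:ℝ)+1)^(k-1) * Real.log ((a:ℝ)+2) ≤
        16*(k:ℝ) * ((a:ℝ)+1)^(k-1) * Real.log ((m:ℝ)+2) := by
      apply mul_le_mul_of_nonneg_left hLa (by positivity)
    have t2 : 16*(k:ℝ) * ((b:ℝ)+1)^(k-1) * Real.log ((b:ℝ)+2) ≤
        16*(k:ℝ) * ((b:ℝ)+1)^(k-1) * Real.log ((m:ℝ)+2) := by
      apply mul_le_mul_of_nonneg_left hLb (by positivity)
    have t3 : 16*(k:ℝ) * ((a:ℝ)+1)^(k-1) * Real.log ((m:ℝ)+2) +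
        16*(k:ℝ) * ((b:ℝ)+1)^(k-1) * Real.log ((m:ℝ)+2) ≤
        16*(k:ℝ) * ((3/4) * ((m:ℝ)+1)^(k-1)) * Real.log ((m:ℝ)+2) := by
      calc 16*(k:ℝ) * ((a:ℝ)+1)^(k-1) * Real.log ((m:ℝ)+2) +
          16*(k:ℝ) * ((b:ℝ)+1)^(k-1) * Real.log ((m:ℝ)+2)
          = 16*(k:ℝ) * ((((a:ℝ)+1)^(k-1) + ((b:ℝ)+1)^(k-1)) * Real.log ((m:ℝ)+2)) := by ring
        _ ≤ 16*(k:ℝ) * (((3/4) * ((m:ℝ)+1)^(k-1)) * Real.log ((m:ℝ)+2)) := by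
            apply mul_le_mul_of_nonneg_left
              (mul_le_mul_of_nonneg_right hsplit hLpos.le) (by positivity)
        _ = 16*(k:ℝ) * ((3/4) * ((m:ℝ)+1)^(k-1)) * Real.log ((m:ℝ)+2) := by ring
    have t4 : (s:ℝ) * ((2*(k-1) : ℕ) : ℝ) * Real.log ((m:ℝ)+2) ≤
        16*(k:ℝ) * ((1/4) * ((m:ℝ)+1)^(k-1)) * Real.log ((m:ℝ)+2) := by
      rw [hsR]
      have hc : ((2*(k-1) : ℕ) : ℝ) ≤ 4*(k:ℝ) := by
        exact_mod_cast (by omega : 2*(k-1) ≤ 4*k)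
      calc ((m:ℝ)+1)^(k-1) * ((2*(k-1) : ℕ) : ℝ) * Real.log ((m:ℝ)+2)
          ≤ ((m:ℝ)+1)^(k-1) * (4*(k:ℝ)) * Real.log ((m:ℝ)+2) := by
            apply mul_le_mul_of_nonneg_right
              (mul_le_mul_of_nonneg_left hc (by positivity)) hLpos.le
        _ = 16*(k:ℝ) * ((1/4) * ((m:ℝ)+1)^(k-1)) * Real.log ((m:ℝ)+2) := by ring
    linarith [t1, t2, t3, t4]



lemma bipGraph_adj_inl_inr {m n : ℕ} {E : Finset (Fin m × Fin n)} {a : Fin m} {b : Fin n} :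
    (bipGraph m n E).Adj (Sum.inl a) (Sum.inr b) ↔ (a, b) ∈ E := by
  constructor
  · rintro (⟨a', b', h, ha, hb⟩ | ⟨a', b', h, ha, hb⟩)
    · cases ha; cases hb; exact h
    · simp at ha
  · intro h
    exact Or.inl ⟨a, b, h, rfl, rfl⟩

variable {k n : ℕ}

/-- If the graph is U(k)-free, then the trace family on any block of columns
has no shattered set of size `≥ k`. -/
lemma fam_no_shatter {E : Finset (Fin n × Fin n)} (hE : UFree (bipGraph n n E) k)
    (blk : Finset (Fin n)) (s : Finset (Fin n))
    (hs : (Finset.univ.image (fun a : Fin n => blk.filter (fun b => (a, b) ∈ E))).Shatters s) :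
    s.card < k := by
  classical
  set 𝒜 := Finset.univ.image (fun a : Fin n => blk.filter (fun b => (a, b) ∈ E)) with h𝒜
  by_contra hcard
  push_neg at hcard
  -- shrink to exactly k
  obtain ⟨s', hs'sub, hs'card⟩ := Finset.exists_subset_card_eq hcard
  have hs' : 𝒜.Shatters s' := hs.mono_right hs'sub
  have hssubblk : s' ⊆ blk := by
    obtain ⟨u, hu, hsu⟩ := hs'.exists_superset
    rw [Finset.mem_image] at hu
    obtain ⟨a0, _, rfl⟩ := hu
    exact hsu.trans (Finset.filter_subset _ _)
  -- get a default row
  obtain ⟨u0, hu0⟩ := hs'.nonempty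
  rw [Finset.mem_image] at hu0
  obtain ⟨a0, -, -⟩ := hu0
  -- choose witnesses
  have hw : ∀ t : Finset (Fin n), ∃ aa : Fin n,
      t ⊆ s' → s' ∩ (blk.filter (fun b => (aa, b) ∈ E)) = t := by
    intro t
    by_cases ht : t ⊆ s'
    · obtain ⟨u, hu, hsu⟩ := hs' ht
      rw [Finset.mem_image] at hu
      obtain ⟨aa, -, rfl⟩ := hu
      exact ⟨aa, fun _ => hsu⟩
    · exact ⟨a0, fun h => absurd h ht⟩
  choose f hf using hw
  -- build the shattered configuration in the graph
  set X : Finset (Fin n ⊕ Fin n) := s'.powerset.image (fun t => Sum.inl (f t)) with hX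
  set Y : Finset (Fin n ⊕ Fin n) := s'.image Sum.inr with hY
  apply hE
  refine ⟨X, Y, ?_, ?_, ?_⟩
  · rw [Finset.disjoint_left]
    intro x hx hy
    rw [hX, Finset.mem_image] at hx
    rw [hY, Finset.mem_image] at hy
    obtain ⟨t, -, rfl⟩ := hx
    obtain ⟨b, -, hb⟩ := hy
    exact absurd hb (by simp)
  · rw [hY, Finset.card_image_of_injective _ Sum.inr_injective, hs'card]
  · intro S hS
    set t := s'.filter (fun b => Sum.inr b ∈ S) with ht
    have htsub : t ⊆ s' := Finset.filter_subset _ _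
    refine ⟨Sum.inl (f t), ?_, ?_⟩
    · rw [hX, Finset.mem_image]
      exact ⟨t, Finset.mem_powerset.2 htsub, rfl⟩
    · intro y hy
      rw [hY, Finset.mem_image] at hy
      obtain ⟨b, hb, rfl⟩ := hy
      have hfb := hf t htsub
      have hblk : b ∈ blk := hssubblk hb
      rw [bipGraph_adj_inl_inr]
      constructor
      · intro hab
        have hbt : b ∈ t := by
          rw [← hfb, Finset.mem_inter, Finset.mem_filter]
          exact ⟨hb, hblk, hab⟩
        rw [ht, Finset.mem_filter] at hbt
        exact hbt.2
      · intro hbS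
        have hbt : b ∈ t := by
          rw [ht, Finset.mem_filter]
          exact ⟨hb, hbS⟩
        rw [← hfb, Finset.mem_inter, Finset.mem_filter] at hbt
        exact hbt.2.2




variable {α : Type*} [DecidableEq α]


section Rank

variable {β : Type*} [Encodable β]

/-- Rank of `u` in a finite set, by encoding order. -/
noncomputable def rk (𝒜 : Finset β) (u : β) : ℕ :=
  (𝒜.filter fun v => Encodable.encode v < Encodable.encode u).card

lemma rk_lt_card {𝒜 : Finset β} {u : β} (hu : u ∈ 𝒜) : rk 𝒜 u < 𝒜.card := by
  classical
  apply Finset.card_lt_card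
  rw [Finset.ssubset_iff_of_subset (Finset.filter_subset _ _)]
  exact ⟨u, hu, by simp⟩

lemma rk_strictMono {𝒜 : Finset β} {u v : β} (hu : u ∈ 𝒜)
    (huv : Encodable.encode u < Encodable.encode v) : rk 𝒜 u < rk 𝒜 v := by
  classical
  apply Finset.card_lt_card
  rw [Finset.ssubset_iff_of_subset]
  · refine ⟨u, ?_, ?_⟩
    · exact Finset.mem_filter.2 ⟨hu, huv⟩
    · simp
  · intro w hw
    rw [Finset.mem_filter] at hw ⊢
    exact ⟨hw.1, hw.2.trans huv⟩

lemma rk_injOn {𝒜 : Finset β} {u v : β} (hu : u ∈ 𝒜) (hv : v ∈ 𝒜)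
    (h : rk 𝒜 u = rk 𝒜 v) : u = v := by
  by_contra hne
  have henc : Encodable.encode u ≠ Encodable.encode v :=
    fun he => hne (Encodable.encode_injective he)
  rcases henc.lt_or_gt with hlt | hlt
  · exact absurd h (Nat.ne_of_lt (rk_strictMono hu hlt))
  · exact absurd h.symm (Nat.ne_of_lt (rk_strictMono hv hlt))

end Rank

set_option maxHeartbeats 1000000 in
lemma count_bound (k : ℕ) (hk : 3 ≤ k) (n m : ℕ) (hm : 1 ≤ m) :
    (Nat.card {E : Finset (Fin n × Fin n) // UFree (bipGraph n n E) k} : ℝ) ≤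
      Real.exp (((n/m + 1 : ℕ) : ℝ) *
        (16*(k:ℝ)*((m:ℝ)+1)^(k-1)*Real.log ((m:ℝ)+2) +
         ((k:ℝ)-1)*(n:ℝ)*Real.log ((m:ℝ)+2))) := by
  classical
  set J := n/m + 1 with hJ
  set blk : Fin J → Finset (Fin n) :=
    fun j => Finset.univ.filter (fun b : Fin n => (b : ℕ)/m = (j : ℕ)) with hblk
  have hblkcard : ∀ j, (blk j).card ≤ m := by
    intro j
    have := Finset.card_le_card_of_injOn (fun b : Fin n => (b:ℕ) % m)
      (s := blk j) (t := Finset.range m) ?_ ?_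
    · simpa using this
    · intro b _
      exact Finset.mem_range.2 (Nat.mod_lt _ hm)
    · intro b₁ hb₁ b₂ hb₂ hb
      simp only [hblk, Finset.coe_filter, Set.mem_setOf_eq] at hb₁ hb₂
      have e₁ := Nat.div_add_mod (b₁:ℕ) m
      have e₂ := Nat.div_add_mod (b₂:ℕ) m
      have hb' : (b₁:ℕ) % m = (b₂:ℕ) % m := hb
      have : (b₁:ℕ) = (b₂:ℕ) := by
        rw [← e₁, ← e₂, hb₁.2, hb₂.2, hb']
      exact Fin.val_injective this
  set tr : Finset (Fin n × Fin n) → Fin n → Fin J → Finset (Fin n) :=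
    fun E a j => (blk j).filter (fun b => (a, b) ∈ E) with htr
  set fam : Finset (Fin n × Fin n) → Fin J → Finset (Finset (Fin n)) :=
    fun E j => Finset.univ.image (fun a => tr E a j) with hfam
  have hfamadm : ∀ (E : Finset (Fin n × Fin n)), UFree (bipGraph n n E) k →
      ∀ j, fam E j ∈ adm k (blk j) := by
    intro E hE j
    rw [mem_adm]
    constructor
    · intro u hu
      rw [hfam, Finset.mem_image] at hu
      obtain ⟨a, -, rfl⟩ := hu
      exact Finset.mem_powerset.2 (Finset.filter_subset _ _)
    · intro s hs
      exact fam_no_shatter hE (blk j) s hs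
  set s' := (m+1)^(k-1) with hs'
  have htrmem : ∀ (E : Finset (Fin n × Fin n)) (a : Fin n) (j : Fin J),
      tr E a j ∈ fam E j := by
    intro E a j
    rw [hfam]
    exact Finset.mem_image_of_mem _ (Finset.mem_univ a)
  have hrkbound : ∀ (E : Finset (Fin n × Fin n)), UFree (bipGraph n n E) k →
      ∀ (a : Fin n) (j : Fin J), rk (fam E j) (tr E a j) < s' := by
    intro E hE a j
    refine (rk_lt_card (htrmem E a j)).trans_le ?_
    refine (card_le_of_mem_adm (by omega : 1 ≤ k) (hfamadm E hE j)).trans ?_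
    exact Nat.pow_le_pow_left (by have := hblkcard j; omega) _
  -- the injection
  have hinj : ∃ Φ : {E : Finset (Fin n × Fin n) // UFree (bipGraph n n E) k} →
      ((∀ j : Fin J, {𝒜 : Finset (Finset (Fin n)) // 𝒜 ∈ adm k (blk j)}) ×
        (Fin n → Fin J → Fin s')),
      Function.Injective Φ := by
    refine ⟨fun Ep => (fun j => ⟨fam Ep.val j, hfamadm _ Ep.2 j⟩,
      fun a j => ⟨rk (fam Ep.val j) (tr Ep.val a j), hrkbound _ Ep.2 a j⟩), ?_⟩
    intro E₁ E₂ h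
    have h1 := congrArg Prod.fst h
    have h2 := congrArg Prod.snd h
    simp only at h1 h2
    apply Subtype.ext
    ext x
    obtain ⟨a, b⟩ := x
    have hjb : (b:ℕ)/m < J := Nat.lt_succ_of_le (Nat.div_le_div_right (le_of_lt b.isLt))
    set j : Fin J := ⟨(b:ℕ)/m, hjb⟩ with hj
    have hfamj : fam E₁.val j = fam E₂.val j := congrArg Subtype.val (congrFun h1 j)
    have hrkeq : rk (fam E₁.val j) (tr E₁.val a j) = rk (fam E₂.val j) (tr E₂.val a j) :=
      congrArg Fin.val (congrFun (congrFun h2 a) j)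
    rw [← hfamj] at hrkeq
    have htreq : tr E₁.val a j = tr E₂.val a j := by
      refine rk_injOn (htrmem _ a j) ?_ hrkeq
      rw [hfamj]
      exact htrmem _ a j
    have hbmem : b ∈ blk j := by
      simp [hblk, hj]
    constructor
    · intro hmem
      have : b ∈ tr E₁.val a j := Finset.mem_filter.2 ⟨hbmem, hmem⟩
      rw [htreq] at this
      exact (Finset.mem_filter.1 this).2
    · intro hmem
      have : b ∈ tr E₂.val a j := Finset.mem_filter.2 ⟨hbmem, hmem⟩
      rw [← htreq] at this
      exact (Finset.mem_filter.1 this).2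
  obtain ⟨Φ, hΦ⟩ := hinj
  have hcard1 : Nat.card {E : Finset (Fin n × Fin n) // UFree (bipGraph n n E) k} ≤
      Nat.card ((∀ j : Fin J, {𝒜 : Finset (Finset (Fin n)) // 𝒜 ∈ adm k (blk j)}) ×
        (Fin n → Fin J → Fin s')) := Nat.card_le_card_of_injective Φ hΦ
  have hcard2 : Nat.card ((∀ j : Fin J, {𝒜 : Finset (Finset (Fin n)) // 𝒜 ∈ adm k (blk j)}) ×
        (Fin n → Fin J → Fin s')) =
      (∏ j : Fin J, (adm k (blk j)).card) * (s' ^ J) ^ n := by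
    rw [Nat.card_prod, Nat.card_pi]
    congr 1
    · apply Finset.prod_congr rfl
      intro j _
      exact Nat.card_eq_finsetCard (adm k (blk j))
    · rw [Nat.card_fun, Nat.card_fun]
      simp [Nat.card_eq_fintype_card]
  -- pass to ℝ
  have hL1 : (0:ℝ) ≤ Real.log ((m:ℝ)+1) := by
    apply Real.log_nonneg
    have : (0:ℝ) ≤ (m:ℝ) := Nat.cast_nonneg m
    linarith
  have hLm : Real.log ((m:ℝ)+1) ≤ Real.log ((m:ℝ)+2) := by
    apply Real.log_le_log (by positivity)
    linarith
  have hLm2 : (0:ℝ) ≤ Real.log ((m:ℝ)+2) := hL1.trans hLm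
  set A := 16*(k:ℝ)*((m:ℝ)+1)^(k-1)*Real.log ((m:ℝ)+2) with hA
  set B := ((k:ℝ)-1)*(n:ℝ)*Real.log ((m:ℝ)+2) with hB
  have hprod1 : ((∏ j : Fin J, (adm k (blk j)).card : ℕ) : ℝ) ≤ Real.exp A ^ J := by
    push_cast
    calc ∏ j : Fin J, ((adm k (blk j)).card : ℝ)
        ≤ ∏ _j : Fin J, Real.exp A := by
          apply Finset.prod_le_prod
          · intro j _
            exact Nat.cast_nonneg _
          · intro j _
            refine (adm_count k hk (blk j).card (blk j) rfl).trans ?_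
            apply Real.exp_le_exp.2
            have hc : ((blk j).card : ℝ) ≤ (m:ℝ) := by exact_mod_cast hblkcard j
            have h1 : (((blk j).card : ℝ)+1)^(k-1) ≤ ((m:ℝ)+1)^(k-1) :=
              pow_le_pow_left₀ (by positivity) (by linarith) _
            have h2 : Real.log (((blk j).card : ℝ)+2) ≤ Real.log ((m:ℝ)+2) := by
              apply Real.log_le_log (by positivity)
              linarith
            have h3 : (0:ℝ) ≤ Real.log (((blk j).card : ℝ)+2) := by
              apply Real.log_nonneg
              have : (0:ℝ) ≤ ((blk j).card : ℝ) := Nat.cast_nonneg _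
              linarith
            rw [hA]
            calc 16*(k:ℝ) * (((blk j).card : ℝ)+1)^(k-1) * Real.log (((blk j).card : ℝ)+2)
                ≤ 16*(k:ℝ) * ((m:ℝ)+1)^(k-1) * Real.log (((blk j).card : ℝ)+2) := by
                  apply mul_le_mul_of_nonneg_right ?_ h3
                  apply mul_le_mul_of_nonneg_left h1 (by positivity)
              _ ≤ 16*(k:ℝ) * ((m:ℝ)+1)^(k-1) * Real.log ((m:ℝ)+2) := by
                  apply mul_le_mul_of_nonneg_left h2 (by positivity)
      _ = Real.exp A ^ J := by
          rw [Finset.prod_const, Finset.card_univ, Fintype.card_fin]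
  have hprod2 : (((s' ^ J) ^ n : ℕ) : ℝ) ≤ Real.exp B ^ J := by
    push_cast
    rw [hs']
    push_cast
    have hx : (0:ℝ) < ((m:ℝ)+1)^(k-1) := by positivity
    calc ((((m:ℝ)+1)^(k-1)) ^ J) ^ n = (((m:ℝ)+1)^(k-1)) ^ (J * n) := by
          rw [← pow_mul]
      _ = Real.exp ((J * n : ℕ) * Real.log (((m:ℝ)+1)^(k-1))) := pow_eq_exp hx _
      _ ≤ Real.exp B ^ J := by
          rw [← Real.exp_nat_mul]
          apply Real.exp_le_exp.2
          rw [Real.log_pow, hB]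
          have hk1 : ((k-1 : ℕ) : ℝ) ≤ (k:ℝ) - 1 := by
            have h1 : 1 ≤ k := by omega
            rw [Nat.cast_sub h1]
            norm_num
          have hstep : ((k-1 : ℕ) : ℝ) * Real.log ((m:ℝ)+1) ≤
              ((k:ℝ)-1) * Real.log ((m:ℝ)+2) :=
            mul_le_mul hk1 hLm hL1 (by
              have : (1:ℝ) ≤ (k:ℝ) := by exact_mod_cast (by omega : 1 ≤ k)
              linarith)
          calc ((J * n : ℕ) : ℝ) * (((k-1 : ℕ) : ℝ) * Real.log ((m:ℝ)+1))
              = (J:ℝ) * ((n:ℝ) * (((k-1 : ℕ) : ℝ) * Real.log ((m:ℝ)+1))) := by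
                push_cast; ring
            _ ≤ (J:ℝ) * ((n:ℝ) * (((k:ℝ)-1) * Real.log ((m:ℝ)+2))) := by
                apply mul_le_mul_of_nonneg_left ?_ (Nat.cast_nonneg J)
                apply mul_le_mul_of_nonneg_left hstep (Nat.cast_nonneg n)
            _ = (J:ℝ) * (((k:ℝ)-1)*(n:ℝ)*Real.log ((m:ℝ)+2)) := by ring
  calc (Nat.card {E : Finset (Fin n × Fin n) // UFree (bipGraph n n E) k} : ℝ)
      ≤ ((((∏ j : Fin J, (adm k (blk j)).card) * (s' ^ J) ^ n : ℕ)) : ℝ) := by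
        rw [← hcard2]; exact_mod_cast hcard1
    _ = ((∏ j : Fin J, (adm k (blk j)).card : ℕ) : ℝ) * (((s' ^ J) ^ n : ℕ) : ℝ) := by
        push_cast; ring
    _ ≤ (Real.exp A ^ J) * (Real.exp B ^ J) := by
        apply mul_le_mul hprod1 hprod2 (Nat.cast_nonneg _) (by positivity)
    _ = Real.exp (((n/m + 1 : ℕ) : ℝ) * (A + B)) := by
        rw [← mul_pow, ← Real.exp_add, ← Real.exp_nat_mul]

end Aux

/-- **Theorem (counting `U(k)`-free bipartite graphs).**  For every integer `k ≥ 3` and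
every sufficiently large `n`, the number of `U(k)`-free bipartite graphs on two fixed
disjoint classes of size `n` (given by their edge sets `E ⊆ Fin n × Fin n`) is at most
`exp (n ^ (2 - 1/(k-1)) * (log n) ^ (k+1))`. -/
theorem count_Uk_free_bipartite (k : ℕ) (hk : 3 ≤ k) :
    ∃ N : ℕ, ∀ n : ℕ, N ≤ n →
      (Nat.card {E : Finset (Fin n × Fin n) // UFree (bipGraph n n E) k} : ℝ) ≤
        Real.exp ((n : ℝ) ^ ((2 : ℝ) - 1 / ((k : ℝ) - 1)) * Real.log n ^ (k + 1)) := by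
  have hkR : (3:ℝ) ≤ (k:ℝ) := by exact_mod_cast hk
  set e : ℝ := 1 / ((k:ℝ) - 1) with hedef
  have hk10 : (0:ℝ) < (k:ℝ) - 1 := by linarith
  have he0 : 0 < e := by rw [hedef]; positivity
  have he1 : e ≤ 1 := by
    rw [hedef, div_le_one hk10]; linarith
  set D : ℝ := 16*(k:ℝ)*3^(k-1) + ((k:ℝ)-1) with hD
  set C : ℝ := 4 * D with hC
  have h3p : (1:ℝ) ≤ 3^(k-1) := one_le_pow₀ (by norm_num)
  have hDneg : 16*(k:ℝ) ≤ 16*(k:ℝ)*3^(k-1) := le_mul_of_one_le_right (by linarith) h3p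
  have hC1 : 1 ≤ C := by rw [hC, hD]; nlinarith
  refine ⟨max 4 ⌈Real.exp C⌉₊, fun n hn => ?_⟩
  have hn4 : 4 ≤ n := le_trans (le_max_left _ _) hn
  have hnC : Real.exp C ≤ (n:ℝ) := by
    have h1 : ⌈Real.exp C⌉₊ ≤ n := le_trans (le_max_right _ _) hn
    exact (Nat.ceil_le.1 h1)
  have hn1R : (1:ℝ) ≤ (n:ℝ) := by exact_mod_cast (by omega : 1 ≤ n)
  have hn0 : (0:ℝ) < (n:ℝ) := by linarith
  set ν : ℝ := (n:ℝ)^e with hν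
  have hν1 : (1:ℝ) ≤ ν := by
    rw [hν]
    calc (1:ℝ) = (1:ℝ)^e := (Real.one_rpow e).symm
      _ ≤ (n:ℝ)^e := Real.rpow_le_rpow (by norm_num) hn1R he0.le
  have hν0 : (0:ℝ) < ν := by linarith
  have hνn : ν ≤ (n:ℝ) := by
    rw [hν]
    calc (n:ℝ)^e ≤ (n:ℝ)^(1:ℝ) := Real.rpow_le_rpow_of_exponent_le hn1R he1
      _ = (n:ℝ) := Real.rpow_one _
  set m : ℕ := ⌈ν⌉₊ with hmdef
  have hm1 : 1 ≤ m := Nat.one_le_iff_ne_zero.2 (by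
    have : 0 < m := Nat.ceil_pos.2 hν0
    omega)
  have hmlb : ν ≤ (m:ℝ) := Nat.le_ceil ν
  have hmub : (m:ℝ) ≤ 2*ν := by
    have := Nat.ceil_lt_add_one hν0.le
    rw [← hmdef] at this
    linarith
  -- apply the master bound
  refine (count_bound k hk n m hm1).trans (Real.exp_le_exp.2 ?_)
  set L : ℝ := Real.log ((m:ℝ)+2) with hL
  have hL0 : 0 ≤ L := by
    rw [hL]
    apply Real.log_nonneg
    have : (0:ℝ) ≤ (m:ℝ) := Nat.cast_nonneg m
    linarith
  have hlogn : (0:ℝ) < Real.log n := Real.log_pos (by exact_mod_cast (by omega : 1 < n))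
  have hLlog : L ≤ 2 * Real.log n := by
    have h1 : (m:ℝ) + 2 ≤ (n:ℝ)*(n:ℝ) := by
      have h4n : (4:ℝ) ≤ (n:ℝ) := by exact_mod_cast hn4
      have : (m:ℝ) + 2 ≤ 4*ν := by linarith
      have h2 : 4*ν ≤ 4*(n:ℝ) := by linarith
      nlinarith
    have hne0 : (n:ℝ) ≠ 0 := ne_of_gt hn0
    calc L ≤ Real.log ((n:ℝ)*(n:ℝ)) := by
          rw [hL]
          apply Real.log_le_log (by positivity) h1
      _ = Real.log n + Real.log n := Real.log_mul hne0 hne0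
      _ = 2 * Real.log n := by ring
  have hpow : ((m:ℝ)+1)^(k-1) ≤ 3^(k-1)*(n:ℝ) := by
    have h1 : (m:ℝ)+1 ≤ 3*ν := by linarith
    have hνpow : ν^(k-1) = (n:ℝ) := by
      rw [hν, ← Real.rpow_natCast ((n:ℝ)^e) (k-1), ← Real.rpow_mul hn0.le]
      have hcast : ((k-1 : ℕ) : ℝ) = (k:ℝ) - 1 := by
        rw [Nat.cast_sub (by omega : 1 ≤ k)]; norm_num
      rw [hcast, hedef, one_div, inv_mul_cancel₀ (ne_of_gt hk10), Real.rpow_one]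
    calc ((m:ℝ)+1)^(k-1) ≤ (3*ν)^(k-1) := pow_le_pow_left₀ (by positivity) h1 _
      _ = 3^(k-1) * ν^(k-1) := mul_pow _ _ _
      _ = 3^(k-1)*(n:ℝ) := by rw [hνpow]
  have hJ' : ((n/m + 1 : ℕ) : ℝ) ≤ 2*((n:ℝ)/ν) := by
    have h1 : ((n/m : ℕ) : ℝ) ≤ (n:ℝ)/(m:ℝ) := Nat.cast_div_le
    have h2 : (n:ℝ)/(m:ℝ) ≤ (n:ℝ)/ν := by
      apply div_le_div_of_nonneg_left hn0.le hν0 hmlb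
    have h3 : (1:ℝ) ≤ (n:ℝ)/ν := (one_le_div hν0).2 hνn
    push_cast
    linarith
  -- the exponent chain
  have hsum : 16*(k:ℝ)*((m:ℝ)+1)^(k-1)*L + ((k:ℝ)-1)*(n:ℝ)*L ≤
      D * ((n:ℝ) * (2*Real.log n)) := by
    have t1 : 16*(k:ℝ)*((m:ℝ)+1)^(k-1)*L ≤ 16*(k:ℝ)*(3^(k-1)*(n:ℝ))*(2*Real.log n) := by
      have hnn : (0:ℝ) ≤ 16*(k:ℝ) := by linarith
      calc 16*(k:ℝ)*((m:ℝ)+1)^(k-1)*L ≤ 16*(k:ℝ)*(3^(k-1)*(n:ℝ))*L := by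
            apply mul_le_mul_of_nonneg_right ?_ hL0
            apply mul_le_mul_of_nonneg_left hpow hnn
        _ ≤ 16*(k:ℝ)*(3^(k-1)*(n:ℝ))*(2*Real.log n) := by
            apply mul_le_mul_of_nonneg_left hLlog
            positivity
    have t2 : ((k:ℝ)-1)*(n:ℝ)*L ≤ ((k:ℝ)-1)*(n:ℝ)*(2*Real.log n) := by
      apply mul_le_mul_of_nonneg_left hLlog
      have : (0:ℝ) ≤ (k:ℝ)-1 := by linarith
      positivity
    rw [hD]
    ring_nf
    ring_nf at t1 t2
    linarith
  have hsumnn : (0:ℝ) ≤ 16*(k:ℝ)*((m:ℝ)+1)^(k-1)*L + ((k:ℝ)-1)*(n:ℝ)*L := by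
    have h1 : (0:ℝ) ≤ 16*(k:ℝ)*((m:ℝ)+1)^(k-1)*L := by positivity
    have h2 : (0:ℝ) ≤ ((k:ℝ)-1)*(n:ℝ)*L := by
      have : (0:ℝ) ≤ (k:ℝ)-1 := by linarith
      positivity
    linarith
  have hchain : ((n/m + 1 : ℕ) : ℝ) *
      (16*(k:ℝ)*((m:ℝ)+1)^(k-1)*L + ((k:ℝ)-1)*(n:ℝ)*L) ≤
      (2*((n:ℝ)/ν)) * (D * ((n:ℝ) * (2*Real.log n))) := by
    apply mul_le_mul hJ' hsum hsumnn (by positivity)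
  refine hchain.trans ?_
  have hrpow : (n:ℝ)/ν * (n:ℝ) = (n:ℝ)^((2:ℝ)-e) := by
    rw [Real.rpow_sub hn0, hν]
    have h2 : (n:ℝ)^(2:ℝ) = (n:ℝ)*(n:ℝ) := by
      rw [show (2:ℝ) = ((2:ℕ):ℝ) by norm_num, Real.rpow_natCast]
      ring
    rw [h2]
    field_simp
  have hCln : C ≤ Real.log n := by
    calc C = Real.log (Real.exp C) := (Real.log_exp C).symm
      _ ≤ Real.log n := Real.log_le_log (Real.exp_pos C) hnC
  have hfin : C * Real.log n ≤ (Real.log n)^(k+1) := by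
    have h1 : C ≤ (Real.log n)^k := by
      refine hCln.trans ?_
      apply le_self_pow₀ (by linarith) (by omega)
    calc C * Real.log n ≤ (Real.log n)^k * Real.log n :=
          mul_le_mul_of_nonneg_right h1 hlogn.le
      _ = (Real.log n)^(k+1) := (pow_succ _ _).symm
  calc (2*((n:ℝ)/ν)) * (D * ((n:ℝ) * (2*Real.log n)))
      = ((n:ℝ)/ν * (n:ℝ)) * (C * Real.log n) := by rw [hC]; ring
    _ = (n:ℝ)^((2:ℝ)-e) * (C * Real.log n) := by rw [hrpow]
    _ ≤ (n:ℝ)^((2:ℝ)-e) * (Real.log n)^(k+1) := by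
        apply mul_le_mul_of_nonneg_left hfin (Real.rpow_nonneg hn0.le _)

end ABBM
end
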